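/- arXiv:1003.3046 — 9 statements merged into one kernel-verified Lean document; each statement's English description precedes it below -/
import Mathlib

section
/- Let R be a commutative ring, d a positive integer, and y_1,...,y_d, x_1,...,x_d elements of R with (y_1,...,y_d) ⊆ (x_1,...,x_d). Suppose A = (a_ij) and B = (b_ij) are two d×d matrices over R such that y_i = Σ_j a_ij x_j = Σ_j b_ij x_j for all i. Then (y_1 ⋯ y_d)^d · (det A − det B) ∈ (y_1^{d+1},...,y_d^{d+1}). -/
/-- If `y_i = Σ_j A i j * x_j = Σ_j B i j * x_j`, then
`(y_1 ⋯ y_d)^d * (det A - det B) ∈ (y_1^{d+1}, …, y_d^{d+1})`. -/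
theorem stmt0 {R : Type*} [CommRing R] {d : ℕ} (hd : 0 < d)
    (x y : Fin d → R) (A B : Matrix (Fin d) (Fin d) R)
    (hxy : Ideal.span (Set.range y) ≤ Ideal.span (Set.range x))
    (hA : ∀ i, y i = ∑ j, A i j * x j)
    (hB : ∀ i, y i = ∑ j, B i j * x j) :
    (∏ i, y i) ^ d * (A.det - B.det) ∈
      Ideal.span (Set.range fun i => y i ^ (d + 1)) := by
  classical
  set T := Ideal.span (Set.range fun i => y i ^ (d + 1)) with hT
  set Z : Fin d → Fin d → R := fun i j => A i j - B i j with hZdef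
  set B' : Fin d → Fin d → R := fun i j => B i j with hB'def
  obtain ⟨e, he⟩ : ∃ e, d = e + 1 := ⟨d - 1, (Nat.succ_pred_eq_of_pos hd).symm⟩
  have expand : A.det = ∑ s : Finset (Fin d), Matrix.det (s.piecewise Z B') := by
    have hZB : Z + B' = fun i j => A i j := by
      funext i j; simp [hZdef, hB'def]
    calc A.det = Matrix.detRowAlternating.toMultilinearMap (Z + B') := by
          rw [hZB]; rfl
    _ = ∑ s : Finset (Fin d), Matrix.detRowAlternating.toMultilinearMap (s.piecewise Z B') :=
        Matrix.detRowAlternating.toMultilinearMap.map_add_univ Z B'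
    _ = ∑ s : Finset (Fin d), Matrix.det (s.piecewise Z B') := rfl
  have expand2 : A.det - B.det =
      ∑ s ∈ Finset.univ.erase ∅, Matrix.det (Finset.piecewise s Z B') := by
    have hBB' : B.det = Matrix.det (Finset.piecewise (∅ : Finset (Fin d)) Z B') := by
      rw [Finset.piecewise_empty]
    rw [expand, ← Finset.add_sum_erase _ _ (Finset.mem_univ (∅ : Finset (Fin d))), hBB']
    ring
  rw [expand2, Finset.mul_sum]
  refine Ideal.sum_mem _ fun s hs => ?_
  obtain ⟨r, hr⟩ := Finset.nonempty_of_ne_empty (Finset.mem_erase.mp hs).1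
  set M : Matrix (Fin d) (Fin d) R := Finset.piecewise s Z B' with hMdef
  set J := Ideal.span (y '' {i | i ≠ r}) with hJdef
  have hMx : ∀ i, M.mulVec x i = if i ∈ s then 0 else y i := by
    intro i
    simp only [Matrix.mulVec, dotProduct, hMdef]
    by_cases h : i ∈ s
    · simp only [Finset.piecewise_eq_of_mem _ _ _ h, h, if_true, hZdef, sub_mul,
        Finset.sum_sub_distrib, ← hA, ← hB, sub_self]
    · simp only [Finset.piecewise_eq_of_notMem _ _ _ h, h, if_false, hB'def, ← hB]
  have hdetx : ∀ j, M.det * x j ∈ J := by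
    intro j
    have hv : M.adjugate.mulVec (M.mulVec x) = M.det • x := by
      rw [Matrix.mulVec_mulVec, Matrix.adjugate_mul, Matrix.smul_mulVec,
        Matrix.one_mulVec]
    have h1 : M.det * x j = ∑ i, M.adjugate j i * (M.mulVec x) i := by
      have h2 := congrFun hv j
      simpa [Matrix.mulVec, dotProduct] using h2.symm
    rw [h1]
    refine Ideal.sum_mem _ fun i _ => ?_
    rw [hMx i]
    by_cases h : i ∈ s
    · simp [h]
    · have hir : i ≠ r := fun hh => h (hh ▸ hr)
      simp only [h, if_false]
      exact Ideal.mul_mem_left _ _ (Ideal.subset_span ⟨i, hir, rfl⟩)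
  have hyr : M.det * y r ∈ J := by
    have hyx : y r ∈ Ideal.span (Set.range x) := hxy (Ideal.subset_span ⟨r, rfl⟩)
    obtain ⟨c, hc⟩ := (Submodule.mem_span_range_iff_exists_fun R).mp hyx
    have h3 : M.det * y r = ∑ j, c j * (M.det * x j) := by
      rw [← hc, Finset.mul_sum]; congr 1; funext j; simp [smul_eq_mul]; ring
    rw [h3]
    exact Ideal.sum_mem _ fun j _ => Ideal.mul_mem_left _ _ (hdetx j)
  set g := ∏ k ∈ Finset.univ.erase r, y k ^ d with hgdef
  have hJT : ∀ w ∈ J, g * w ∈ T := by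
    intro w hw
    induction hw using Submodule.span_induction with
    | mem z hz =>
      obtain ⟨i, hi, rfl⟩ := hz
      have hig : g = y i ^ d * ∏ k ∈ (Finset.univ.erase r).erase i, y k ^ d :=
        (Finset.mul_prod_erase _ _ (Finset.mem_erase.mpr ⟨hi, Finset.mem_univ i⟩)).symm
      have h4 : g * y i = y i ^ (d + 1) * ∏ k ∈ (Finset.univ.erase r).erase i, y k ^ d := by
        rw [hig, pow_succ]; ring
      rw [h4]
      exact Ideal.mul_mem_right _ _ (Ideal.subset_span ⟨i, rfl⟩)
    | zero => simp
    | add u v _ _ hu hv => rw [mul_add]; exact Ideal.add_mem _ hu hv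
    | smul a u _ hu =>
      rw [smul_eq_mul, mul_comm a u, ← mul_assoc]
      exact Ideal.mul_mem_right _ _ hu
  have h1 : (∏ i, y i) ^ d = y r ^ d * g := by
    rw [← Finset.prod_pow]
    exact (Finset.mul_prod_erase _ _ (Finset.mem_univ r)).symm
  have h2 : (∏ i, y i) ^ d * M.det = y r ^ e * (g * (M.det * y r)) := by
    have h5 : y r ^ d = y r ^ e * y r := by rw [he, pow_succ]
    rw [h1, h5]; ring
  rw [h2]
  exact Ideal.mul_mem_left _ _ (hJT _ hyr)
end

section
/- Let (R,m) be a Noetherian local ring of dimension d, let x_1,...,x_d and y_1,...,y_d both be systems of parameters with y_i = Σ_j a_ij x_j for a matrix A. Then the map R/(x)^lim → R/(y)^lim induced by multiplication by det A is injective; that is, if r·det A ∈ (y_1,...,y_d)^lim then r ∈ (x_1,...,x_d)^lim. -/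
/-!
Choose `N` with every `xᵢᴺ` in `(y₁ᵗ, …, y_dᵗ)`, where `t` witnesses the hypothesis on `r`. The vector
`(xᵢᴺ)` then has two matrix expressions in `x`: `P · diag(yᵗ⁻¹) · A`, where `P` writes `xᴺ` in
terms of `yᵗ`, and `diag(xᴺ⁻¹)`. By a lemma of Wiebe, the determinants of two such matrices agree
modulo `(x₁²ᴺ, …, x_d²ᴺ) : (x₁⋯x_d)ᴺ`. By Cramer's rule `det P` carries `(yᵗ)` into `(xᴺ)`, so the
hypothesis on `det A · r` turns into `(x₁⋯x_d)²ᴺ⁻¹ r ∈ (x₁²ᴺ, …, x_d²ᴺ)`.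
-/

/-- The limit closure of a finite sequence `x` in a commutative ring. -/
def limClosure {R : Type*} [CommRing R] {n : ℕ} (x : Fin n → R) : Set R :=
  {r : R | ∃ t : ℕ, 1 ≤ t ∧
    (∏ i, x i) ^ (t - 1) * r ∈ Ideal.span (Set.range fun i => x i ^ t)}

/-- A sequence of `d` elements of a `d`-dimensional Noetherian local ring is a
system of parameters if it generates an ideal primary to the maximal ideal. -/
def IsSOP {R : Type*} [CommRing R] [IsLocalRing R] {d : ℕ} (x : Fin d → R) : Prop :=
  (Ideal.span (Set.range x)).radical = IsLocalRing.maximalIdeal R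

open Matrix Finset

section

variable {R : Type*} [CommRing R]

theorem Ideal.mul_mem_of_mem_span {S : Set R} {K : Ideal R} {c z : R}
    (h : ∀ s ∈ S, c * s ∈ K) (hz : z ∈ Ideal.span S) : c * z ∈ K := by
  induction hz using Submodule.span_induction with
  | mem s hs => exact h s hs
  | zero => simp
  | add u v _ _ hu hv => rw [mul_add]; exact K.add_mem hu hv
  | smul s u _ hu => rw [smul_eq_mul, mul_left_comm]; exact K.mul_mem_left s hu

theorem Ideal.exists_pow_mem_of_span_range_le_radical {ι : Type*} [Finite ι] {x : ι → R}
    {I : Ideal R} (h : Ideal.span (Set.range x) ≤ I.radical) :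
    ∃ N, 1 ≤ N ∧ ∀ i, x i ^ N ∈ I := by
  obtain ⟨n, hn⟩ := Ideal.exists_pow_le_of_le_radical_of_fg h
    (Submodule.fg_span (Set.finite_range x))
  refine ⟨n + 1, by omega, fun i => ?_⟩
  rw [pow_succ]
  exact I.mul_mem_right _ (hn (Ideal.pow_mem_pow (Ideal.subset_span (Set.mem_range_self i)) n))

theorem prod_mul_mem_span_range_sq {ι : Type*} [DecidableEq ι] (a : ι → R) {s : Finset ι}
    {k : ι} (hk : k ∈ s) :
    (∏ i ∈ s, a i) * a k ∈ Ideal.span (Set.range fun i => a i ^ 2) := by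
  rw [← mul_prod_erase s a hk, mul_comm, ← mul_assoc, ← sq]
  exact Ideal.mul_mem_right _ _ (Ideal.subset_span ⟨k, rfl⟩)

section Determinants

variable {ι : Type*} [Fintype ι] [DecidableEq ι]

theorem Matrix.det_mul_mem_span_range_of_mulVec_eq (M : Matrix ι ι R) {b a : ι → R}
    (h : M *ᵥ b = a) (j : ι) : M.det * b j ∈ Ideal.span (Set.range a) := by
  have hcramer : M.adjugate *ᵥ a = M.det • b := by
    rw [← h, mulVec_mulVec, adjugate_mul, smul_mulVec, one_mulVec]
  rw [← smul_eq_mul, ← Pi.smul_apply, ← hcramer]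
  exact Ideal.sum_mem _ fun k _ => Ideal.mul_mem_left _ _ (Ideal.subset_span ⟨k, rfl⟩)

theorem prod_mul_det_updateRow_mem_span_range_sq {M : Matrix ι ι R} {b a : ι → R}
    (hM : M *ᵥ b = a) (i : ι) {e : ι → R} (he : e ⬝ᵥ b = 0) :
    (∏ k, a k) * (M.updateRow i e).det ∈ Ideal.span (Set.range fun k => a k ^ 2) := by
  set N := M.updateRow i e
  have hN : N *ᵥ b = Function.update a i 0 := by rw [updateRow_mulVec, hM, he]
  have hai : a i ∈ Ideal.span (Set.range b) := by
    rw [← hM]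
    exact Ideal.sum_mem _ fun j _ => Ideal.mul_mem_left _ _ (Ideal.subset_span ⟨j, rfl⟩)
  have hdet : N.det * a i ∈ Ideal.span (Set.range (Function.update a i 0)) :=
    Ideal.mul_mem_of_mem_span
      (Set.forall_mem_range.mpr (N.det_mul_mem_span_range_of_mulVec_eq hN)) hai
  have hkill : ∀ k, (∏ l ∈ univ.erase i, a l) * Function.update a i 0 k ∈
      Ideal.span (Set.range fun k => a k ^ 2) := by
    intro k
    rcases eq_or_ne k i with rfl | hk
    · simp
    · rw [Function.update_of_ne hk]
      exact prod_mul_mem_span_range_sq a (mem_erase.mpr ⟨hk, mem_univ k⟩)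
  rw [← mul_prod_erase univ a (mem_univ i), mul_right_comm, mul_comm, mul_comm (a i)]
  exact Ideal.mul_mem_of_mem_span (Set.forall_mem_range.mpr hkill) hdet

end Determinants

section Wiebe

variable {d : ℕ}

def Matrix.rowInterpolate (Q Q' : Matrix (Fin d) (Fin d) R) (n : ℕ) : Matrix (Fin d) (Fin d) R :=
  of fun k => if (k : ℕ) < n then Q k else Q' k

theorem Matrix.rowInterpolate_mulVec {Q Q' : Matrix (Fin d) (Fin d) R} {b a : Fin d → R}
    (hQ : Q *ᵥ b = a) (hQ' : Q' *ᵥ b = a) (n : ℕ) : Q.rowInterpolate Q' n *ᵥ b = a := by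
  funext k
  by_cases hk : (k : ℕ) < n
  · simp only [rowInterpolate, mulVec, of_apply, hk, if_true, ← hQ]
  · simp only [rowInterpolate, mulVec, of_apply, hk, if_false, ← hQ']

theorem Matrix.det_rowInterpolate_succ_sub (Q Q' : Matrix (Fin d) (Fin d) R) (i : Fin d) :
    (Q.rowInterpolate Q' (i + 1)).det - (Q.rowInterpolate Q' i).det =
      ((Q.rowInterpolate Q' i).updateRow i (Q i - Q' i)).det := by
  set M := Q.rowInterpolate Q' i
  have hsucc : Q.rowInterpolate Q' (i + 1) = M.updateRow i (Q i - Q' i + M i) := by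
    ext k j
    rcases eq_or_ne k i with rfl | hk
    · simp [M, rowInterpolate]
    · have hk' : (k : ℕ) ≠ i := Fin.val_ne_of_ne hk
      simp only [M, rowInterpolate, updateRow_ne hk, of_apply]
      split_ifs <;> first | rfl | omega
  rw [hsucc, det_updateRow_add, updateRow_eq_self, add_sub_cancel_right]

/-- Wiebe's lemma. -/
theorem prod_mul_det_sub_det_mem_span_range_sq {Q Q' : Matrix (Fin d) (Fin d) R}
    {b a : Fin d → R} (hQ : Q *ᵥ b = a) (hQ' : Q' *ᵥ b = a) :
    (∏ i, a i) * (Q.det - Q'.det) ∈ Ideal.span (Set.range fun i => a i ^ 2) := by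
  have htelescope : Q.det - Q'.det =
      ∑ i : Fin d, ((Q.rowInterpolate Q' (i + 1)).det - (Q.rowInterpolate Q' i).det) := by
    rw [Fin.sum_univ_eq_sum_range (fun n => (Q.rowInterpolate Q' (n + 1)).det -
      (Q.rowInterpolate Q' n).det), sum_range_sub (fun n => (Q.rowInterpolate Q' n).det)]
    have hd : Q.rowInterpolate Q' d = Q := by ext k j; simp [rowInterpolate]
    have h0 : Q.rowInterpolate Q' 0 = Q' := by ext k j; simp [rowInterpolate]
    rw [hd, h0]
  rw [htelescope, mul_sum]
  refine Ideal.sum_mem _ fun i _ => ?_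
  rw [det_rowInterpolate_succ_sub]
  refine prod_mul_det_updateRow_mem_span_range_sq (rowInterpolate_mulVec hQ hQ' i) i ?_
  rw [sub_dotProduct]
  exact sub_eq_zero.mpr ((congrFun hQ i).trans (congrFun hQ' i).symm)

theorem prod_mul_det_mul_mem_span_range_sq {Q Q' : Matrix (Fin d) (Fin d) R}
    {b a : Fin d → R} (hQ : Q *ᵥ b = a) (hQ' : Q' *ᵥ b = a) {r : R}
    (hr : Q.det * r ∈ Ideal.span (Set.range a)) :
    (∏ i, a i) * (Q'.det * r) ∈ Ideal.span (Set.range fun i => a i ^ 2) := by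
  have hQr : (∏ i, a i) * (Q.det * r) ∈ Ideal.span (Set.range fun i => a i ^ 2) :=
    Ideal.mul_mem_of_mem_span
      (Set.forall_mem_range.mpr fun k => prod_mul_mem_span_range_sq a (mem_univ k)) hr
  have hdiff := Ideal.mul_mem_right r _ (prod_mul_det_sub_det_mem_span_range_sq hQ hQ')
  rw [show (∏ i, a i) * (Q'.det * r) =
    (∏ i, a i) * (Q.det * r) - (∏ i, a i) * (Q.det - Q'.det) * r by ring]
  exact Ideal.sub_mem _ hQr hdiff

end Wiebe

theorem mem_limClosure_of_det_mul_mem {d : ℕ} {x y : Fin d → R} (A : Matrix (Fin d) (Fin d) R)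
    (hA : A *ᵥ x = y) (hxy : Ideal.span (Set.range x) ≤ (Ideal.span (Set.range y)).radical)
    {r : R} (hr : A.det * r ∈ limClosure y) : r ∈ limClosure x := by
  obtain ⟨t, ht, hmem⟩ := hr
  have hyt : Ideal.span (Set.range y) ≤ (Ideal.span (Set.range fun j => y j ^ t)).radical :=
    Ideal.span_le.mpr fun _ ⟨j, hj⟩ => hj ▸ ⟨t, Ideal.subset_span ⟨j, rfl⟩⟩
  obtain ⟨N, hN, hxN⟩ := Ideal.exists_pow_mem_of_span_range_le_radical
    (hxy.trans (Ideal.radical_le_radical_iff.mpr hyt))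
  choose P hP using fun i => (Submodule.mem_span_range_iff_exists_fun R).mp (hxN i)
  have hPy : of P *ᵥ (fun j => y j ^ t) = fun i => x i ^ N := funext fun i => by
    simpa [mulVec, dotProduct] using hP i
  have hQ : (of P * diagonal (fun j => y j ^ (t - 1)) * A) *ᵥ x = fun i => x i ^ N := by
    rw [← mulVec_mulVec, hA, ← mulVec_mulVec, ← hPy]
    congr 1
    funext j
    rw [mulVec_diagonal, pow_sub_one_mul (by omega)]
  have hQ' : diagonal (fun i => x i ^ (N - 1)) *ᵥ x = fun i => x i ^ N := funext fun i => by
    rw [mulVec_diagonal, pow_sub_one_mul (by omega)]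
  have hQr : (of P * diagonal (fun j => y j ^ (t - 1)) * A).det * r ∈
      Ideal.span (Set.range fun i => x i ^ N) := by
    rw [det_mul, det_mul, det_diagonal, prod_pow, mul_assoc, mul_assoc]
    exact Ideal.mul_mem_of_mem_span
      (Set.forall_mem_range.mpr ((of P).det_mul_mem_span_range_of_mulVec_eq hPy)) hmem
  have hfinal := prod_mul_det_mul_mem_span_range_sq hQ hQ' hQr
  refine ⟨2 * N, by omega, ?_⟩
  rw [det_diagonal, prod_pow, prod_pow, ← mul_assoc, ← pow_add] at hfinal
  simp only [← pow_mul] at hfinal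
  rwa [show N + (N - 1) = 2 * N - 1 by omega, funext fun i => congrArg (x i ^ ·) (mul_comm N 2)]
    at hfinal

end

theorem stmt3_general {R : Type*} [CommRing R] [IsLocalRing R]
    {d : ℕ}
    (x y : Fin d → R) (hx : IsSOP x) (hy : IsSOP y)
    (A : Matrix (Fin d) (Fin d) R) (hA : ∀ i, y i = ∑ j, A i j * x j)
    (r : R) (hr : A.det * r ∈ limClosure y) :
    r ∈ limClosure x :=
  mem_limClosure_of_det_mul_mem A (funext fun i => (hA i).symm)
    (by rw [hy, ← hx]; exact Ideal.le_radical) hr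

/-- if `x` and `y` are both systems of parameters and
`y_i = Σ_j A i j x_j`, then multiplication by `det A` is injective from
`R/(x)^lim` to `R/(y)^lim`. -/
theorem stmt3 {R : Type*} [CommRing R] [IsNoetherianRing R] [IsLocalRing R]
    {d : ℕ} (hdim : ringKrullDim R = d)
    (x y : Fin d → R) (hx : IsSOP x) (hy : IsSOP y)
    (A : Matrix (Fin d) (Fin d) R) (hA : ∀ i, y i = ∑ j, A i j * x j)
    (r : R) (hr : A.det * r ∈ limClosure y) :
    r ∈ limClosure x :=
  stmt3_general x y hx hy A hA r hr
end

section
/- Let R be a Noetherian local ring of prime characteristic p and dimension d, and let x_1,...,x_d, y_1,...,y_d be sequences with y_i = Σ_j a_ij x_j for a matrix A. If z lies in the tight closure (x_1,...,x_d)^*, then (det A)·z lies in (y_1,...,y_d)^*. Hence multiplication by det A induces a well-defined map R/(x)^* → R/(y)^*. -/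
/-- The `q`-th Frobenius power `I^{[q]}` of an ideal: the ideal generated by
`q`-th powers of elements of `I`. -/
def frobPow {R : Type*} [CommRing R] (I : Ideal R) (q : ℕ) : Ideal R :=
  Ideal.span ((fun a => a ^ q) '' (I : Set R))

/-- Tight closure membership: `z ∈ I^*` iff there is `c` outside every minimal
prime of `R` with `c z^q ∈ I^{[q]}` for all large `q = p^e`. -/
def memTightClosure {R : Type*} [CommRing R] (p : ℕ) (I : Ideal R) (z : R) : Prop :=
  ∃ c : R, (∀ P ∈ minimalPrimes R, c ∉ P) ∧
    ∃ N : ℕ, ∀ e : ℕ, N ≤ e → c * z ^ p ^ e ∈ frobPow I (p ^ e)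

/-!
Raising to the power `q = p^e` is the ring endomorphism `iterateFrobenius`, so `I^{[q]}` is the
extension of `I` along it; in particular `(x)^{[q]} = (x^q)`. Applying Frobenius to `y = A x`
gives `y^q = A^{(q)} x^q` with `det A^{(q)} = (det A)^q`, and Cramer's rule
`adj(A^{(q)}) y^q = (det A)^q x^q` yields `(det A)^q (x^q) ⊆ (y^q)`. Hence a test element `c` for
`z ∈ (x)^*` is also one for `det A · z ∈ (y)^*`.
-/

open Matrix

section Frobenius

variable {R : Type*} [CommRing R] (p : ℕ) [ExpChar R p]

theorem frobPow_eq_map_iterateFrobenius (I : Ideal R) (e : ℕ) :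
    frobPow I (p ^ e) = I.map (iterateFrobenius R p e) :=
  rfl

theorem frobPow_span_range {ι : Type*} (x : ι → R) (e : ℕ) :
    frobPow (Ideal.span (Set.range x)) (p ^ e) = Ideal.span (Set.range fun i => x i ^ p ^ e) := by
  rw [frobPow_eq_map_iterateFrobenius, Ideal.map_span, ← Set.range_comp]
  rfl

end Frobenius

section Cramer

variable {R : Type*} [CommRing R] {n : Type*} [Fintype n] [DecidableEq n]

theorem Matrix.det_mul_mem_span_range_mulVec (A : Matrix n n R) (x : n → R) {w : R}
    (hw : w ∈ Ideal.span (Set.range x)) : A.det * w ∈ Ideal.span (Set.range (A *ᵥ x)) := by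
  have hx : ∀ j, A.det * x j ∈ Ideal.span (Set.range (A *ᵥ x)) := by
    intro j
    have cramer : A.adjugate *ᵥ (A *ᵥ x) = A.det • x := by
      rw [mulVec_mulVec, adjugate_mul, smul_mulVec, one_mulVec]
    rw [← smul_eq_mul, ← Pi.smul_apply, ← cramer]
    exact (Submodule.mem_span_range_iff_exists_fun R).mpr ⟨A.adjugate j, rfl⟩
  obtain ⟨a, rfl⟩ := (Submodule.mem_span_range_iff_exists_fun R).mp hw
  rw [Finset.mul_sum]
  refine Ideal.sum_mem _ fun j _ => ?_
  rw [smul_eq_mul, mul_left_comm]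
  exact Ideal.mul_mem_left _ _ (hx j)

end Cramer

theorem memTightClosure_span_range_mulVec {R : Type*} [CommRing R] {p : ℕ} [ExpChar R p]
    {n : Type*} [Fintype n] [DecidableEq n] (A : Matrix n n R) (x : n → R) {z : R}
    (hz : memTightClosure p (Ideal.span (Set.range x)) z) :
    memTightClosure p (Ideal.span (Set.range (A *ᵥ x))) (A.det * z) := by
  obtain ⟨c, hc, N, hN⟩ := hz
  refine ⟨c, hc, N, fun e he => ?_⟩
  set F := iterateFrobenius R p e
  have hcz := hN e he
  have frob_mulVec : (fun i => (A *ᵥ x) i ^ p ^ e) = F.mapMatrix A *ᵥ fun j => x j ^ p ^ e :=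
    funext fun i => RingHom.map_mulVec F A x i
  rw [frobPow_span_range] at hcz ⊢
  rw [frob_mulVec, mul_pow, mul_left_comm, ← iterateFrobenius_def, RingHom.map_det]
  exact (F.mapMatrix A).det_mul_mem_span_range_mulVec _ hcz

theorem stmt4_general {R : Type*} [CommRing R]
    {p : ℕ} (hp : p.Prime) [CharP R p] {d : ℕ}
    (x y : Fin d → R) (A : Matrix (Fin d) (Fin d) R)
    (hA : ∀ i, y i = ∑ j, A i j * x j)
    (z : R) (hz : memTightClosure p (Ideal.span (Set.range x)) z) :
    memTightClosure p (Ideal.span (Set.range y)) (A.det * z) := by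
  have : ExpChar R p := .prime hp
  obtain rfl : y = A *ᵥ x := funext hA
  exact memTightClosure_span_range_mulVec A x hz

/-- in a Noetherian local ring of prime characteristic `p`, if
`y_i = Σ_j A i j x_j` and `z ∈ (x)^*`, then `det A · z ∈ (y)^*`; hence
multiplication by `det A` induces a well-defined map `R/(x)^* → R/(y)^*`. -/
theorem stmt4 {R : Type*} [CommRing R] [IsNoetherianRing R] [IsLocalRing R]
    {p : ℕ} (hp : p.Prime) [CharP R p] {d : ℕ} (hdim : ringKrullDim R = d)
    (x y : Fin d → R) (A : Matrix (Fin d) (Fin d) R)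
    (hA : ∀ i, y i = ∑ j, A i j * x j)
    (z : R) (hz : memTightClosure p (Ideal.span (Set.range x)) z) :
    memTightClosure p (Ideal.span (Set.range y)) (A.det * z) :=
  stmt4_general hp x y A hA z hz
end

section
/- Let R be a commutative ring, I an ideal, and y_1,...,y_d a regular sequence contained in I. Suppose R/I admits a finite free resolution 0 → R^n → ⋯ → R → R/I → 0 of length d, and the Koszul complex on y_1,...,y_d maps to this resolution lifting the surjection R/(y) → R/I, with the top map R → R^n given by (f_1,...,f_n). Then (y_1,...,y_d) : I = (y_1,...,y_d) + (f_1,...,f_n). -/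
open Finset in
/-- The degree-`j` term of the Koszul complex on `d` elements: a free module
with basis the `j`-element subsets of `{1, …, d}` (i.e. `⋀^j R^d`). -/
def KoszulTerm (R : Type*) [CommRing R] (d j : ℕ) : Type _ :=
  {s : Finset (Fin d) // s.card = j} → R

noncomputable instance (R : Type*) [CommRing R] (d j : ℕ) :
    AddCommGroup (KoszulTerm R d j) := by unfold KoszulTerm; infer_instance

noncomputable instance (R : Type*) [CommRing R] (d j : ℕ) :
    Module R (KoszulTerm R d j) := by unfold KoszulTerm; infer_instance

open Finset in
/-- The Koszul differential `K_{j+1} → K_j` on the sequence `y`, given on basis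
elements by `e_s ↦ Σ_{i ∈ s} (-1)^{#{i' ∈ s | i' < i}} yᵢ e_{s \ {i}}`. -/
noncomputable def koszulD {R : Type*} [CommRing R] {d : ℕ} (y : Fin d → R) (j : ℕ) :
    KoszulTerm R d (j + 1) →ₗ[R] KoszulTerm R d j :=
  Matrix.mulVecLin
    (Matrix.of fun (t : {s : Finset (Fin d) // s.card = j})
        (s : {s : Finset (Fin d) // s.card = j + 1}) =>
      ∑ i ∈ s.1, if s.1.erase i = t.1 then (-1 : R) ^ (s.1.filter (· < i)).card * y i else 0)

/-!
The Koszul complex `K = K(y)` is a free resolution of `R/(y)` and `F` one of `R/I`; both vanish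
in degree `d + 1`. A chain map out of `K` into an exact complex that induces zero on `H₀` is
null-homotopic, so its degree-`d` component factors through `∂ : K_d → K_{d-1}`, whose entries
lie in `(y)`. For `a ∈ I`, apply this to `a • α : K → F`: it gives `a f ∈ (y)`, whence
`(y) + (f) ⊆ (y) : I`. For `r ∈ (y) : I`, lift multiplication by `r`, `R/I → R/(y)`, to a chain
map `β : F → K` and apply it to `r • id - β ∘ α : K → K`: evaluated at the generator of `K_d`
this gives `r - (β_d f)_top ∈ (y)`, and `(β_d f)_top ∈ (f)`.
-/

section ChainMaps

variable {R : Type*} [CommRing R]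

theorem LinearMap.exists_comp_eq_of_range_le {P M N : Type*} [AddCommGroup P] [Module R P]
    [Module.Projective R P] [AddCommGroup M] [Module R M] [AddCommGroup N] [Module R N]
    (g : M →ₗ[R] N) (φ : P →ₗ[R] N) (h : LinearMap.range φ ≤ LinearMap.range g) :
    ∃ ψ : P →ₗ[R] M, g ∘ₗ ψ = φ := by
  obtain ⟨ψ, hψ⟩ := Module.projective_lifting_property g.rangeRestrict
    (φ.codRestrict _ fun x => h ⟨x, rfl⟩) g.surjective_rangeRestrict
  exact ⟨ψ, LinearMap.ext fun x => congrArg Subtype.val (LinearMap.congr_fun hψ x)⟩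

variable {S G : ℕ → Type*} [∀ j, AddCommGroup (S j)] [∀ j, Module R (S j)]
  [∀ j, Module.Projective R (S j)] [∀ j, AddCommGroup (G j)] [∀ j, Module R (G j)]

theorem exists_nullHomotopy (dS : ∀ j, S (j + 1) →ₗ[R] S j) (dG : ∀ j, G (j + 1) →ₗ[R] G j)
    (hdS : ∀ j, dS j ∘ₗ dS (j + 1) = 0)
    (hG : ∀ j, Function.Exact (dG (j + 1)) (dG j))
    (θ : ∀ j, S j →ₗ[R] G j) (hθ : ∀ j, θ j ∘ₗ dS j = dG j ∘ₗ θ (j + 1))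
    (hθ₀ : LinearMap.range (θ 0) ≤ LinearMap.range (dG 0)) :
    ∃ h : ∀ j, S j →ₗ[R] G (j + 1),
      dG 0 ∘ₗ h 0 = θ 0 ∧ ∀ j, dG (j + 1) ∘ₗ h (j + 1) + h j ∘ₗ dS j = θ (j + 1) := by
  have lift : ∀ j (g : S (j + 1) →ₗ[R] G (j + 1)), dG j ∘ₗ (θ (j + 1) - g) = 0 →
      ∃ ψ, dG (j + 1) ∘ₗ ψ + g = θ (j + 1) := fun j g hg => by
    obtain ⟨ψ, hψ⟩ := LinearMap.exists_comp_eq_of_range_le (dG (j + 1)) (θ (j + 1) - g)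
      fun _ ⟨v, hv⟩ => (hG j _).mp (hv ▸ LinearMap.congr_fun hg v)
    exact ⟨ψ, by rw [hψ, sub_add_cancel]⟩
  obtain ⟨h₀, hh₀⟩ := LinearMap.exists_comp_eq_of_range_le (dG 0) (θ 0) hθ₀
  obtain ⟨h₁, hh₁⟩ := lift 0 (h₀ ∘ₗ dS 0) (by
    rw [LinearMap.comp_sub, ← LinearMap.comp_assoc, hh₀, hθ, sub_self])
  -- The defect `θ - h ∘ dS` in the next degree is a cycle, by the previous equation and `dS² = 0`.
  have next : ∀ j (h : S j →ₗ[R] G (j + 1)) (h' : S (j + 1) →ₗ[R] G (j + 2)),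
      dG (j + 1) ∘ₗ h' + h ∘ₗ dS j = θ (j + 1) →
      ∃ h'' : S (j + 2) →ₗ[R] G (j + 3), dG (j + 2) ∘ₗ h'' + h' ∘ₗ dS (j + 1) = θ (j + 2) :=
    fun j h h' hh => lift (j + 1) _ (by
      rw [LinearMap.comp_sub, ← LinearMap.comp_assoc, ← hθ, ← LinearMap.sub_comp, ← hh,
        add_sub_cancel_left, LinearMap.comp_assoc, hdS, LinearMap.comp_zero])
  choose nxt hnxt using next
  let H : ∀ j, {p : (S j →ₗ[R] G (j + 1)) × (S (j + 1) →ₗ[R] G (j + 2)) //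
      dG (j + 1) ∘ₗ p.2 + p.1 ∘ₗ dS j = θ (j + 1)} :=
    fun j => Nat.rec ⟨(h₀, h₁), hh₁⟩ (fun j p => ⟨(p.1.2, nxt j _ _ p.2), hnxt j _ _ p.2⟩) j
  exact ⟨fun j => (H j).1.1, hh₀, fun j => (H j).2⟩

theorem exists_chainMap_extending (dS : ∀ j, S (j + 1) →ₗ[R] S j)
    (dG : ∀ j, G (j + 1) →ₗ[R] G j) (hdS : ∀ j, dS j ∘ₗ dS (j + 1) = 0)
    (hG : ∀ j, Function.Exact (dG (j + 1)) (dG j))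
    (β₀ : S 0 →ₗ[R] G 0) (hβ₀ : LinearMap.range (β₀ ∘ₗ dS 0) ≤ LinearMap.range (dG 0)) :
    ∃ β : ∀ j, S j →ₗ[R] G j, β 0 = β₀ ∧ ∀ j, β j ∘ₗ dS j = dG j ∘ₗ β (j + 1) := by
  -- A null-homotopy `h` of the chain map `β₀ ∘ dS 0 : S[1] → G` gives, up to signs, the
  -- higher components of `β`.
  let θ : ∀ j, S (j + 1) →ₗ[R] G j
    | 0 => β₀ ∘ₗ dS 0
    | _ + 1 => 0
  have hθ : ∀ j, θ j ∘ₗ dS (j + 1) = dG j ∘ₗ θ (j + 1)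
    | 0 => by simp only [θ, LinearMap.comp_assoc, hdS, LinearMap.comp_zero]
    | _ + 1 => by simp only [θ, LinearMap.comp_zero, LinearMap.zero_comp]
  obtain ⟨h, hh₀, hh⟩ := exists_nullHomotopy (fun j => dS (j + 1)) dG (fun j => hdS (j + 1)) hG
    θ hθ hβ₀
  refine ⟨fun | 0 => β₀ | j + 1 => (-1 : R) ^ j • h j, rfl, fun j => ?_⟩
  cases j with
  | zero => simpa only [pow_zero, one_smul] using hh₀.symm
  | succ j =>
    have := eq_neg_of_add_eq_zero_right (hh j)
    simp only [LinearMap.smul_comp, this, pow_succ, mul_neg_one, neg_smul, LinearMap.comp_neg,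
      LinearMap.comp_smul, smul_neg]

end ChainMaps

open Finset

namespace Fin

variable {d : ℕ}

theorem last_notMem_map_castSuccEmb (s : Finset (Fin d)) :
    Fin.last d ∉ s.map Fin.castSuccEmb := by
  simp [Fin.castSucc_ne_last]

theorem map_castSuccEmb_preimage (t : Finset (Fin (d + 1))) :
    (t.preimage Fin.castSucc (Fin.castSucc_injective d).injOn).map Fin.castSuccEmb =
      t.erase (Fin.last d) := by
  ext a
  cases a using Fin.lastCases <;> simp [Fin.castSucc_ne_last]

theorem preimage_castSucc_map (s : Finset (Fin d)) :
    (s.map Fin.castSuccEmb).preimage Fin.castSucc (Fin.castSucc_injective d).injOn = s := by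
  ext; simp

theorem preimage_castSucc_insert_last (s : Finset (Fin (d + 1))) :
    (insert (Fin.last d) s).preimage Fin.castSucc (Fin.castSucc_injective d).injOn =
      s.preimage Fin.castSucc (Fin.castSucc_injective d).injOn := by
  ext; simp [Fin.castSucc_ne_last]

theorem card_preimage_castSucc (t : Finset (Fin (d + 1))) :
    #(t.preimage Fin.castSucc (Fin.castSucc_injective d).injOn) =
      if Fin.last d ∈ t then #t - 1 else #t := by
  rw [← card_map Fin.castSuccEmb, Fin.map_castSuccEmb_preimage]
  split_ifs with h
  · exact card_erase_of_mem h
  · rw [erase_eq_of_notMem h]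

theorem card_filter_map_castSuccEmb_lt (s : Finset (Fin d)) (i : Fin d) :
    #((s.map Fin.castSuccEmb).filter (· < i.castSucc)) = #(s.filter (· < i)) := by
  simp [filter_map, Function.comp_def]

end Fin

abbrev KoszulIndex (d j : ℕ) : Type := {s : Finset (Fin d) // s.card = j}

section Koszul

variable {R : Type*} [CommRing R] {d : ℕ}

instance (j : ℕ) : Module.Projective R (KoszulTerm R d j) := by
  unfold KoszulTerm; exact Module.Projective.of_free

instance (d : ℕ) : IsEmpty (KoszulIndex d (d + 1)) :=
  ⟨fun s => by simpa using (s.2 ▸ card_le_univ s.1 : d + 1 ≤ Fintype.card (Fin d))⟩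

theorem koszulD_apply (y : Fin d → R) (j : ℕ) (v : KoszulTerm R d (j + 1))
    (t : KoszulIndex d j) :
    koszulD y j v t = ∑ i : Fin d,
      if h : i ∈ t.1 then 0
      else (-1 : R) ^ #(t.1.filter (· < i)) * y i *
        v ⟨insert i t.1, by rw [card_insert_of_notMem h, t.2]⟩ := by
  change ∑ s : KoszulIndex d (j + 1), (∑ i ∈ s.1, if s.1.erase i = t.1
      then (-1 : R) ^ #(s.1.filter (· < i)) * y i else 0) * v s = _
  have key : ∀ (i : Fin d) (s : KoszulIndex d (j + 1)),
      i ∈ s.1 ∧ s.1.erase i = t.1 ↔ i ∉ t.1 ∧ s.1 = insert i t.1 := fun i s =>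
    ⟨fun ⟨hs, he⟩ => ⟨he ▸ notMem_erase i s.1, he ▸ (insert_erase hs).symm⟩,
      fun ⟨ht, he⟩ => ⟨he ▸ mem_insert_self i t.1, he ▸ erase_insert ht⟩⟩
  simp only [sum_mul, ← sum_filter]
  rw [sum_comm' (t' := univ) (s' := fun i => univ.filter fun s => i ∈ s.1 ∧ s.1.erase i = t.1)
    (by simp)]
  refine sum_congr rfl fun i _ => ?_
  split_ifs with hi
  · exact sum_eq_zero fun s hs => absurd hi ((key i s).mp (mem_filter.mp hs).2).1
  · rw [sum_eq_single_of_mem ⟨insert i t.1, by rw [card_insert_of_notMem hi, t.2]⟩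
      (by simp [key, hi]) fun s hs hne =>
        absurd (Subtype.ext ((key i s).mp (mem_filter.mp hs).2).2) hne]
    simp [filter_insert]

theorem koszulD_apply_mem_span (y : Fin d → R) (j : ℕ) (v : KoszulTerm R d (j + 1))
    (t : KoszulIndex d j) : koszulD y j v t ∈ Ideal.span (Set.range y) := by
  rw [koszulD_apply]
  refine Ideal.sum_mem _ fun i _ => ?_
  split_ifs
  · exact zero_mem _
  · exact Ideal.mul_mem_right _ _ (Ideal.mul_mem_left _ _ (Ideal.subset_span ⟨i, rfl⟩))

theorem mem_range_koszulD_zero_iff (y : Fin d → R) (x : KoszulTerm R d 0) :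
    x ∈ LinearMap.range (koszulD y 0) ↔ x ⟨∅, card_empty⟩ ∈ Ideal.span (Set.range y) := by
  refine ⟨fun ⟨w, hw⟩ => hw ▸ koszulD_apply_mem_span y 0 w _, fun hx => ?_⟩
  obtain ⟨c, hc⟩ := (Submodule.mem_span_range_iff_exists_fun R).mp hx
  refine ⟨show KoszulTerm R d 1 from fun s => ∑ i ∈ s.1, c i, funext fun t => ?_⟩
  obtain rfl : t = ⟨∅, card_empty⟩ := Subtype.ext (card_eq_zero.mp t.2)
  rw [koszulD_apply, ← hc]
  refine sum_congr rfl fun i _ => ?_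
  simp [mul_comm]

end Koszul

namespace KoszulTerm

variable {R : Type*} [CommRing R] {d : ℕ}

-- `K(y₁, …, y_{d+1})` is the mapping cone of `y_{d+1}` on `K(y₁, …, y_d)`; `castSuccPart` and
-- `lastPart` are its two components, `glue` reassembles them.
def castSuccPart {j : ℕ} (v : KoszulTerm R (d + 1) j) : KoszulTerm R d j :=
  fun s => v ⟨s.1.map Fin.castSuccEmb, by rw [card_map, s.2]⟩

def lastPart {j : ℕ} (v : KoszulTerm R (d + 1) (j + 1)) : KoszulTerm R d j :=
  fun s => v ⟨insert (Fin.last d) (s.1.map Fin.castSuccEmb), by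
    rw [card_insert_of_notMem (Fin.last_notMem_map_castSuccEmb _), card_map, s.2]⟩

noncomputable def glue {j : ℕ} (p : KoszulTerm R d (j + 1)) (u : KoszulTerm R d j) :
    KoszulTerm R (d + 1) (j + 1) :=
  fun t => if h : Fin.last d ∈ t.1
    then u ⟨t.1.preimage Fin.castSucc (Fin.castSucc_injective d).injOn, by
      rw [Fin.card_preimage_castSucc, if_pos h, t.2, Nat.add_sub_cancel]⟩
    else p ⟨t.1.preimage Fin.castSucc (Fin.castSucc_injective d).injOn, by
      rw [Fin.card_preimage_castSucc, if_neg h, t.2]⟩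

theorem castSuccPart_glue {j : ℕ} (p : KoszulTerm R d (j + 1)) (u : KoszulTerm R d j) :
    castSuccPart (glue p u) = p :=
  funext fun s => by
    simp only [castSuccPart, glue, dif_neg (Fin.last_notMem_map_castSuccEmb s.1),
      Fin.preimage_castSucc_map]

theorem lastPart_glue {j : ℕ} (p : KoszulTerm R d (j + 1)) (u : KoszulTerm R d j) :
    lastPart (glue p u) = u :=
  funext fun s => by
    simp only [lastPart, glue, dif_pos (mem_insert_self _ _), Fin.preimage_castSucc_insert_last,
      Fin.preimage_castSucc_map]

@[simp] theorem castSuccPart_zero {j : ℕ} : castSuccPart (0 : KoszulTerm R (d + 1) j) = 0 := rfl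

@[simp] theorem lastPart_zero {j : ℕ} : lastPart (0 : KoszulTerm R (d + 1) (j + 1)) = 0 := rfl

theorem glue_castSuccPart_lastPart {j : ℕ} (v : KoszulTerm R (d + 1) (j + 1)) :
    glue (castSuccPart v) (lastPart v) = v := by
  funext t
  have hmap := Fin.map_castSuccEmb_preimage t.1
  by_cases h : Fin.last d ∈ t.1
  · simp only [glue, lastPart, dif_pos h, hmap, insert_erase h]
  · simp only [glue, castSuccPart, dif_neg h, hmap, erase_eq_of_notMem h]

theorem ext_parts {j : ℕ} {v w : KoszulTerm R (d + 1) (j + 1)}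
    (h₁ : castSuccPart v = castSuccPart w) (h₂ : lastPart v = lastPart w) : v = w := by
  rw [← glue_castSuccPart_lastPart v, ← glue_castSuccPart_lastPart w, h₁, h₂]

theorem ext_castSuccPart {v w : KoszulTerm R (d + 1) 0}
    (h : castSuccPart v = castSuccPart w) : v = w := by
  funext t
  obtain ⟨t, ht⟩ := t
  obtain rfl := card_eq_zero.mp ht
  exact congrFun h ⟨∅, card_empty⟩

theorem castSuccPart_koszulD (y : Fin (d + 1) → R) (j : ℕ) (v : KoszulTerm R (d + 1) (j + 1)) :
    castSuccPart (koszulD y j v) = koszulD (fun i => y i.castSucc) j (castSuccPart v) +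
      ((-1 : R) ^ j * y (Fin.last d)) • lastPart v := by
  funext s
  change koszulD y j v _ = koszulD _ j (castSuccPart v) s + _ * lastPart v s
  rw [koszulD_apply, koszulD_apply, Fin.sum_univ_castSucc]
  congr 1
  · refine sum_congr rfl fun i _ => ?_
    simp [castSuccPart, Fin.card_filter_map_castSuccEmb_lt, map_insert]
  · simp [lastPart, filter_true_of_mem, Fin.castSucc_lt_last, s.2]

theorem lastPart_koszulD (y : Fin (d + 1) → R) (j : ℕ) (v : KoszulTerm R (d + 1) (j + 2)) :
    lastPart (koszulD y (j + 1) v) = koszulD (fun i => y i.castSucc) j (lastPart v) := by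
  funext s
  change koszulD y (j + 1) v _ = koszulD _ j (lastPart v) s
  rw [koszulD_apply, koszulD_apply, Fin.sum_univ_castSucc, dif_pos (mem_insert_self _ _),
    add_zero]
  refine sum_congr rfl fun i _ => ?_
  simp [lastPart, filter_insert, (Fin.castSucc_lt_last i).asymm, Fin.card_filter_map_castSuccEmb_lt,
    map_insert, insert_comm]

end KoszulTerm

section Exactness

open KoszulTerm RingTheory.Sequence

variable {R : Type*} [CommRing R]

theorem koszulD_koszulD {d : ℕ} (y : Fin d → R) (j : ℕ) (v : KoszulTerm R d (j + 2)) :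
    koszulD y j (koszulD y (j + 1) v) = 0 := by
  induction d generalizing j with
  | zero => funext t; simp [koszulD_apply]; rfl
  | succ d ih =>
    have h₁ : castSuccPart (koszulD y j (koszulD y (j + 1) v)) = 0 := by
      rw [castSuccPart_koszulD, castSuccPart_koszulD, lastPart_koszulD, map_add, map_smul, ih,
        zero_add, pow_succ, mul_neg_one, neg_mul, neg_smul, neg_add_cancel]
    cases j with
    | zero => exact ext_castSuccPart (h₁.trans castSuccPart_zero.symm)
    | succ j =>
      refine ext_parts (h₁.trans castSuccPart_zero.symm) ?_
      rw [lastPart_koszulD, lastPart_koszulD, ih, lastPart_zero]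

theorem koszulD_comp_koszulD {d : ℕ} (y : Fin d → R) (j : ℕ) :
    koszulD y j ∘ₗ koszulD y (j + 1) = 0 :=
  LinearMap.ext (koszulD_koszulD y j)

theorem isWeaklyRegular_ofFn_succ {d : ℕ} {y : Fin (d + 1) → R}
    (hy : IsWeaklyRegular R (List.ofFn y)) :
    IsWeaklyRegular R (List.ofFn fun i : Fin d => y i.castSucc) ∧
      ∀ r, y (Fin.last d) * r ∈ Ideal.span (Set.range fun i : Fin d => y i.castSucc) →
        r ∈ Ideal.span (Set.range fun i : Fin d => y i.castSucc) := by
  rw [List.ofFn_succ', List.concat_eq_append, isWeaklyRegular_append_iff,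
    isWeaklyRegular_singleton_iff, isSMulRegular_quotient_iff_mem_of_smul_mem] at hy
  have hJ : (Ideal.ofList (List.ofFn fun i : Fin d => y i.castSucc) • ⊤ : Submodule R R) =
      Ideal.span (Set.range fun i : Fin d => y i.castSucc) := by
    ext; simp [Ideal.ofList, List.mem_ofFn']; rfl
  rw [hJ] at hy
  exact ⟨hy.1, hy.2⟩

theorem koszulD_ker_le_range {d : ℕ} (y : Fin d → R) (hy : IsWeaklyRegular R (List.ofFn y))
    (j : ℕ) : LinearMap.ker (koszulD y j) ≤ LinearMap.range (koszulD y (j + 1)) := by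
  induction d generalizing j with
  | zero =>
    intro z _
    obtain rfl : z = 0 := funext fun t => absurd t.2 (by simp [Subsingleton.elim t.1 ∅])
    exact zero_mem _
  | succ d ih =>
    intro z hz
    rw [LinearMap.mem_ker] at hz
    obtain ⟨hy', hlast⟩ := isWeaklyRegular_ofFn_succ hy
    set y' : Fin d → R := fun i => y i.castSucc
    set c : R := (-1) ^ j * y (Fin.last d)
    have hz₁ : koszulD y' j (castSuccPart z) = -(c • lastPart z) := by
      rw [eq_neg_iff_add_eq_zero, ← castSuccPart_koszulD, hz, castSuccPart_zero]
    -- The part of `z` through the last index is a boundary: in degree `0` by regularity of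
    -- `y (last d)` modulo the others, in higher degrees by induction.
    obtain ⟨u, hu⟩ : lastPart z ∈ LinearMap.range (koszulD y' j) := by
      cases j with
      | zero =>
        rw [mem_range_koszulD_zero_iff]
        refine hlast _ ?_
        have h := koszulD_apply_mem_span y' 0 (castSuccPart z) ⟨∅, card_empty⟩
        rw [hz₁] at h
        change -(c * lastPart z ⟨∅, card_empty⟩) ∈ Ideal.span (Set.range y') at h
        simpa [c] using neg_mem h
      | succ j =>
        exact ih y' hy' j (by rw [LinearMap.mem_ker, ← lastPart_koszulD, hz, lastPart_zero])
    obtain ⟨p, hp⟩ := ih y' hy' j (x := castSuccPart z + c • u) (by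
      rw [LinearMap.mem_ker, map_add, map_smul, hu, hz₁, neg_add_cancel])
    refine ⟨glue p u, ext_parts ?_ ?_⟩
    · rw [castSuccPart_koszulD, castSuccPart_glue, lastPart_glue, hp, pow_succ, mul_neg_one,
        neg_mul, neg_smul, add_neg_cancel_right]
    · rw [lastPart_koszulD, lastPart_glue, hu]

theorem koszulD_exact {d : ℕ} (y : Fin d → R) (hy : IsWeaklyRegular R (List.ofFn y)) (j : ℕ) :
    Function.Exact (koszulD y (j + 1)) (koszulD y j) :=
  LinearMap.exact_iff.mpr <| le_antisymm (koszulD_ker_le_range y hy j)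
    (LinearMap.range_le_ker_iff.mpr (koszulD_comp_koszulD y j))

theorem koszul_chainMap_top_mem_span {d : ℕ} {κ : ℕ → Type*} [IsEmpty (κ (d + 1))]
    (y : Fin d → R)
    (dG : ∀ j, (κ (j + 1) → R) →ₗ[R] (κ j → R)) (hG : ∀ j, Function.Exact (dG (j + 1)) (dG j))
    (θ : ∀ j, KoszulTerm R d j →ₗ[R] (κ j → R))
    (hθ : ∀ j, θ j ∘ₗ koszulD y j = dG j ∘ₗ θ (j + 1))
    (hθ₀ : LinearMap.range (θ 0) ≤ LinearMap.range (dG 0)) (v : KoszulTerm R d d) (k : κ d) :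
    θ d v k ∈ Ideal.span (Set.range y) := by
  obtain ⟨h, hh₀, hh⟩ := exists_nullHomotopy (koszulD y) dG (koszulD_comp_koszulD y) hG θ hθ hθ₀
  cases d with
  | zero =>
    rw [← hh₀, LinearMap.comp_apply, Subsingleton.elim (h 0 v) 0, map_zero]
    exact zero_mem _
  | succ d =>
    rw [← hh d, LinearMap.add_apply, LinearMap.comp_apply, Subsingleton.elim (h (d + 1) v) 0,
      map_zero, zero_add, LinearMap.comp_apply]
    exact Ideal.map_pi _ _ (koszulD_apply_mem_span y d v) _ _

end Exactness

section Linkage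

open RingTheory.Sequence

variable {R : Type*} [CommRing R] {d : ℕ} {I : Ideal R} {y : Fin d → R} {rk : ℕ → ℕ}
  {dF : ∀ j : ℕ, (Fin (rk (j + 1)) → R) →ₗ[R] (Fin (rk j) → R)}
  {ε : (Fin (rk 0) → R) →ₗ[R] R ⧸ I}
  {α : ∀ j : ℕ, KoszulTerm R d j →ₗ[R] (Fin (rk j) → R)}

theorem mul_top_mem_span_of_mem [IsEmpty (Fin (rk (d + 1)))] (hexact0 : Function.Exact (dF 0) ε)
    (hexact : ∀ j : ℕ, Function.Exact (dF (j + 1)) (dF j))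
    (hcomm : ∀ j : ℕ, (α j).comp (koszulD y j) = (dF j).comp (α (j + 1)))
    (hlift : ∀ v : KoszulTerm R d 0, ε (α 0 v) = Ideal.Quotient.mk I (v ⟨∅, card_empty⟩))
    {a : R} (ha : a ∈ I) (k : Fin (rk d)) :
    a * α d (fun _ => 1) k ∈ Ideal.span (Set.range y) := by
  -- `a • α` lifts the zero map `R/(y) → R/I`.
  have hθ₀ : LinearMap.range (a • α 0) ≤ LinearMap.range (dF 0) := by
    rintro _ ⟨v, rfl⟩
    refine (hexact0 _).mp ?_
    rw [LinearMap.smul_apply, map_smul, hlift, Algebra.smul_def, Ideal.Quotient.algebraMap_eq,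
      ← map_mul, Ideal.Quotient.eq_zero_iff_mem]
    exact I.mul_mem_right _ ha
  exact koszul_chainMap_top_mem_span y dF hexact (fun j => a • α j)
    (fun j => by rw [LinearMap.smul_comp, hcomm, LinearMap.comp_smul]) hθ₀ (fun _ => 1) k

theorem exists_chainMap_koszul_lifting_mul (hyreg : IsWeaklyRegular R (List.ofFn y))
    (hexact0 : Function.Exact (dF 0) ε)
    (hexact : ∀ j : ℕ, Function.Exact (dF (j + 1)) (dF j))
    {r : R} (hr : r ∈ (Ideal.span (Set.range y)).colon I) :
    ∃ β : ∀ j, (Fin (rk j) → R) →ₗ[R] KoszulTerm R d j,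
      (∀ j, β j ∘ₗ dF j = koszulD y j ∘ₗ β (j + 1)) ∧
      ∀ x a, ε x = Ideal.Quotient.mk I a →
        r * a - β 0 x ⟨∅, card_empty⟩ ∈ Ideal.span (Set.range y) := by
  set J := Ideal.span (Set.range y)
  let μ : R ⧸ I →ₗ[R] R ⧸ J :=
    Submodule.mapQ I J (LinearMap.lsmul R R r) fun s hs => Submodule.mem_colon.mp hr s hs
  let π : KoszulTerm R d 0 →ₗ[R] R ⧸ J := J.mkQ ∘ₗ LinearMap.proj ⟨∅, card_empty⟩
  obtain ⟨β₀, hβ₀⟩ := LinearMap.exists_comp_eq_of_range_le π (μ ∘ₗ ε) fun x _ =>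
    ⟨fun _ => J.mkQ_surjective x |>.choose, J.mkQ_surjective x |>.choose_spec⟩
  obtain ⟨β, rfl, hβ⟩ := exists_chainMap_extending (S := fun j => Fin (rk j) → R) dF (koszulD y)
    (fun j => (hexact j).linearMap_comp_eq_zero) (koszulD_exact y hyreg) β₀ (by
      rintro _ ⟨w, rfl⟩
      rw [mem_range_koszulD_zero_iff, ← Submodule.Quotient.mk_eq_zero]
      change π (β₀ (dF 0 w)) = 0
      rw [← LinearMap.comp_apply π, hβ₀, LinearMap.comp_apply, (hexact0 _).mpr ⟨w, rfl⟩,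
        map_zero])
  refine ⟨β, hβ, fun x a hx => ?_⟩
  rw [← Submodule.Quotient.mk_eq_zero, Submodule.Quotient.mk_sub, sub_eq_zero]
  change μ (Ideal.Quotient.mk I a) = π (β 0 x)
  rw [← LinearMap.comp_apply π, hβ₀, LinearMap.comp_apply, hx]

theorem mem_sup_span_top_of_mem_colon (hyreg : IsWeaklyRegular R (List.ofFn y))
    (hexact0 : Function.Exact (dF 0) ε)
    (hexact : ∀ j : ℕ, Function.Exact (dF (j + 1)) (dF j))
    (hcomm : ∀ j : ℕ, (α j).comp (koszulD y j) = (dF j).comp (α (j + 1)))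
    (hlift : ∀ v : KoszulTerm R d 0, ε (α 0 v) = Ideal.Quotient.mk I (v ⟨∅, card_empty⟩))
    {r : R} (hr : r ∈ (Ideal.span (Set.range y)).colon I) :
    r ∈ Ideal.span (Set.range y) ⊔ Ideal.span (Set.range (α d fun _ => 1)) := by
  obtain ⟨β, hβ, hβ₀⟩ := exists_chainMap_koszul_lifting_mul hyreg hexact0 hexact hr
  -- `r • id - β ∘ α` lifts the zero map on `R/(y)`.
  let θ : ∀ j, KoszulTerm R d j →ₗ[R] KoszulTerm R d j := fun j => r • LinearMap.id - β j ∘ₗ α j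
  have hθ : ∀ j, θ j ∘ₗ koszulD y j = koszulD y j ∘ₗ θ (j + 1) := fun j => by
    simp only [θ, LinearMap.sub_comp, LinearMap.comp_sub, LinearMap.smul_comp,
      LinearMap.comp_smul, LinearMap.id_comp, LinearMap.comp_id]
    rw [LinearMap.comp_assoc, hcomm, ← LinearMap.comp_assoc, hβ, LinearMap.comp_assoc]
  have hθ₀ : LinearMap.range (θ 0) ≤ LinearMap.range (koszulD y 0) := by
    rintro _ ⟨v, rfl⟩
    rw [mem_range_koszulD_zero_iff]
    exact hβ₀ _ _ (hlift v)
  have htop := koszul_chainMap_top_mem_span (κ := KoszulIndex d) y (koszulD y)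
    (koszulD_exact y hyreg) θ hθ hθ₀ (fun _ => 1) ⟨univ, card_fin d⟩
  change r • (1 : R) - β d (α d fun _ => 1) ⟨univ, card_fin d⟩ ∈ _ at htop
  rw [smul_eq_mul, mul_one] at htop
  have hβf : β d (α d fun _ => 1) ⟨univ, card_fin d⟩ ∈ Ideal.span (Set.range (α d fun _ => 1)) :=
    Ideal.map_pi _ _ (fun k => Ideal.subset_span (Set.mem_range_self k)) _ _
  simpa using add_mem (Submodule.mem_sup_left htop) (Submodule.mem_sup_right hβf)

end Linkage

theorem stmt5_general {R : Type*} [CommRing R] {d : ℕ}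
    (I : Ideal R) (y : Fin d → R)
    (hyreg : RingTheory.Sequence.IsRegular R (List.ofFn y))
    -- the free resolution `F` of `R/I`: ranks `rk j`, differentials `dF j : F_{j+1} → F_j`
    (rk : ℕ → ℕ) (hrktop : ∀ j, d < j → rk j = 0)
    (dF : ∀ j : ℕ, (Fin (rk (j + 1)) → R) →ₗ[R] (Fin (rk j) → R))
    (ε : (Fin (rk 0) → R) →ₗ[R] R ⧸ I)
    (hexact0 : Function.Exact (dF 0) ε)
    (hexact : ∀ j : ℕ, Function.Exact (dF (j + 1)) (dF j))
    -- the chain map `α : K_•(y; R) → F_•` lifting `R/(y) → R/I`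
    (α : ∀ j : ℕ, KoszulTerm R d j →ₗ[R] (Fin (rk j) → R))
    (hcomm : ∀ j : ℕ, (α j).comp (koszulD y j) = (dF j).comp (α (j + 1)))
    (hlift : ∀ v : KoszulTerm R d 0,
      ε (α 0 v) = Ideal.Quotient.mk I (v ⟨(∅ : Finset (Fin d)), Finset.card_empty⟩))
    -- the top map `K_d = R → R^n = F_d` is given by the vector `f`
    (f : Fin (rk d) → R) (hf : f = α d (fun _ => (1 : R))) :
    (Ideal.span (Set.range y)).colon I =
      Ideal.span (Set.range y) ⊔ Ideal.span (Set.range f) := by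
  subst hf
  have : IsEmpty (Fin (rk (d + 1))) := by rw [hrktop (d + 1) d.lt_succ_self]; infer_instance
  refine le_antisymm (fun r hr => mem_sup_span_top_of_mem_colon hyreg.toIsWeaklyRegular hexact0
    hexact hcomm hlift hr) (sup_le Ideal.le_colon ?_)
  rw [Ideal.span_le]
  rintro _ ⟨k, rfl⟩
  refine Submodule.mem_colon.mpr fun a ha => ?_
  rw [smul_eq_mul, mul_comm]
  exact mul_top_mem_span_of_mem hexact0 hexact hcomm hlift ha k

/-- linkage lemma: let `y₁, …, y_d` be a regular sequence contained
in an ideal `I` of a commutative ring `R`, and let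
`0 → R^n →^{∂d} ⋯ → R^{rk 1} →^{∂_0} R → R/I → 0` be a free resolution of
`R/I` of length `d`.  Suppose the Koszul complex `K_•(y; R)` maps to this
resolution by a chain map `α` lifting the natural surjection `R/(y) → R/I`, the
bottom map being the identity of `R` and the top map `R = K_d → R^n` being given
by `(f₁, …, f_n)`.  Then `(y₁, …, y_d) : I = (y₁, …, y_d) + (f₁, …, f_n)`. -/
theorem stmt5 {R : Type*} [CommRing R] {d n : ℕ}
    (I : Ideal R) (y : Fin d → R)
    (hyreg : RingTheory.Sequence.IsRegular R (List.ofFn y))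
    (hyI : Ideal.span (Set.range y) ≤ I)
    -- the free resolution `F` of `R/I`: ranks `rk j`, differentials `dF j : F_{j+1} → F_j`
    (rk : ℕ → ℕ) (hrk0 : rk 0 = 1) (hrkd : rk d = n) (hrktop : ∀ j, d < j → rk j = 0)
    (dF : ∀ j : ℕ, (Fin (rk (j + 1)) → R) →ₗ[R] (Fin (rk j) → R))
    (ε : (Fin (rk 0) → R) →ₗ[R] R ⧸ I)
    (hε : Function.Surjective ε)
    (hexact0 : Function.Exact (dF 0) ε)
    (hexact : ∀ j : ℕ, Function.Exact (dF (j + 1)) (dF j))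
    -- the chain map `α : K_•(y; R) → F_•` lifting `R/(y) → R/I`
    (α : ∀ j : ℕ, KoszulTerm R d j →ₗ[R] (Fin (rk j) → R))
    (hcomm : ∀ j : ℕ, (α j).comp (koszulD y j) = (dF j).comp (α (j + 1)))
    (hlift : ∀ v : KoszulTerm R d 0,
      ε (α 0 v) = Ideal.Quotient.mk I (v ⟨(∅ : Finset (Fin d)), Finset.card_empty⟩))
    -- the top map `K_d = R → R^n = F_d` is given by the vector `f`
    (f : Fin (rk d) → R) (hf : f = α d (fun _ => (1 : R))) :
    (Ideal.span (Set.range y)).colon I =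
      Ideal.span (Set.range y) ⊔ Ideal.span (Set.range f) :=
  stmt5_general I y hyreg rk hrktop dF ε hexact0 hexact α hcomm hlift f hf
end

section
/- Let (R,m) be a 1-dimensional Noetherian local ring, x a parameter, u ∈ R, and y = ux. Then y is a parameter if and only if the map R/(x)^lim → R/(y)^lim induced by multiplication by u is injective, i.e., if and only if (y)^lim : u = (x)^lim. -/
/-!
Let `Γ_x = {r | x^n r = 0 for some n}` be the `x`-power torsion of `R`, so that
`(x)^lim = (x) + Γ_x`. If `y = u x` is a parameter, then `Γ_y ⊆ Γ_x` and `x^n ∈ (u x)` for some `n`;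
so `u r ∈ c y + Γ_y` gives `x^n (r - c x) ∈ x u (r - c x) R ⊆ Γ_x`, i.e. `r ∈ (x)^lim`.
Conversely, injectivity gives `Γ_y ⊆ (x) + Γ_x`; as `Γ_x ⊆ Γ_y` and `Γ_y : x = Γ_y`, this says
`Γ_y = Γ_x + x Γ_y`, and Nakayama yields `Γ_y = Γ_x`. A prime `q ≠ m` containing `y` is minimal
since `dim R = 1`, so `y` is nilpotent in `R_q`: some `s ∉ q` lies in `Γ_y = Γ_x`, forcing `x ∈ q`,
which is absurd. Hence `(y)` is `m`-primary.
-/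
/-- The limit closure of a single element: `(x)^lim = ⋃_{t≥1} ((x^t) : x^{t-1})`. -/
def limClosure1 {R : Type*} [CommRing R] (x : R) : Set R :=
  {r : R | ∃ t : ℕ, 1 ≤ t ∧ x ^ (t - 1) * r ∈ Ideal.span {x ^ t}}

open IsLocalRing

section

variable {R : Type*} [CommRing R]

def powerTorsion (x : R) : Ideal R :=
  Submodule.torsion' R R (Submonoid.powers x)

lemma mem_powerTorsion {x r : R} : r ∈ powerTorsion x ↔ ∃ n : ℕ, x ^ n * r = 0 := by
  simp [powerTorsion, Submodule.mem_torsion'_iff, Submonoid.mem_powers_iff]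

lemma mem_limClosure1_iff {x r : R} :
    r ∈ limClosure1 x ↔ ∃ c : R, r - c * x ∈ powerTorsion x := by
  simp only [limClosure1, Set.mem_ofPred_eq, Ideal.mem_span_singleton', mem_powerTorsion]
  constructor
  · rintro ⟨t, ht, c, hc⟩
    refine ⟨c, t - 1, ?_⟩
    obtain ⟨t, rfl⟩ := Nat.exists_eq_add_of_le' ht
    simp only [Nat.add_sub_cancel] at hc ⊢
    linear_combination -hc
  · rintro ⟨c, n, hn⟩
    exact ⟨n + 1, by omega, c, by simp only [Nat.add_sub_cancel]; linear_combination -hn⟩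

lemma powerTorsion_le_of_mem_radical {x y : R} (h : y ∈ (Ideal.span {x}).radical) :
    powerTorsion x ≤ powerTorsion y := by
  intro r hr
  obtain ⟨m, a, ha⟩ := h.imp fun _ => Ideal.mem_span_singleton'.1
  obtain ⟨n, hn⟩ := mem_powerTorsion.1 hr
  refine mem_powerTorsion.2 ⟨m * n, ?_⟩
  rw [pow_mul, ← ha, mul_pow, mul_assoc, hn, mul_zero]

lemma mem_powerTorsion_of_mul_mem {x y c : R} (hxy : x ∣ y) (h : c * x ∈ powerTorsion y) :
    c ∈ powerTorsion y := by
  obtain ⟨v, rfl⟩ := hxy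
  obtain ⟨n, hn⟩ := mem_powerTorsion.1 h
  exact mem_powerTorsion.2 ⟨n + 1, by linear_combination v * hn⟩

theorem mem_limClosure1_of_mul_mem {x u r : R} (hx : x ∈ (Ideal.span {u * x}).radical)
    (h : u * r ∈ limClosure1 (u * x)) : r ∈ limClosure1 x := by
  obtain ⟨c, hc⟩ := mem_limClosure1_iff.1 h
  obtain ⟨n, d, hd⟩ := hx.imp fun _ => Ideal.mem_span_singleton'.1
  have hu : u * (r - c * x) ∈ powerTorsion x := by
    convert powerTorsion_le_of_mem_radical hx hc using 1
    ring
  -- `x ^ n (r - c x) = d x · u (r - c x)`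
  obtain ⟨m, hm⟩ := mem_powerTorsion.1 (Ideal.mul_mem_left _ (d * x) hu)
  refine mem_limClosure1_iff.2 ⟨c, mem_powerTorsion.2 ⟨m + n, ?_⟩⟩
  rw [pow_add, mul_assoc, ← hd, ← hm]
  ring

theorem powerTorsion_mul_le_powerTorsion [IsNoetherianRing R] {x u : R}
    (hx : x ∈ Ideal.jacobson ⊥) (H : ∀ r : R, u * r ∈ limClosure1 (u * x) → r ∈ limClosure1 x) :
    powerTorsion (u * x) ≤ powerTorsion x := by
  have hxy : powerTorsion x ≤ powerTorsion (u * x) :=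
    powerTorsion_le_of_mem_radical
      (Ideal.le_radical (Ideal.mem_span_singleton.2 (dvd_mul_left x u)))
  refine Submodule.le_of_le_smul_of_le_jacobson_bot (I := Ideal.span {x})
    (IsNoetherian.noetherian _) ((Ideal.span_singleton_le_iff_mem _).2 hx) fun e he => ?_
  have hue : u * e ∈ limClosure1 (u * x) :=
    mem_limClosure1_iff.2 ⟨0, by simpa using Ideal.mul_mem_left _ u he⟩
  obtain ⟨c, hc⟩ := mem_limClosure1_iff.1 (H e hue)
  have hcx : c ∈ powerTorsion (u * x) :=
    mem_powerTorsion_of_mul_mem (dvd_mul_left x u) (by simpa using sub_mem he (hxy hc))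
  have he_eq : e = (e - c * x) + x • c := by rw [smul_eq_mul]; ring
  rw [he_eq]
  exact Submodule.add_mem_sup hc (Submodule.smul_mem_smul (Ideal.mem_span_singleton_self x) hcx)

lemma exists_mul_pow_eq_zero_of_mem_minimalPrimes {q : Ideal R} (hq : q ∈ minimalPrimes R)
    {y : R} (hy : y ∈ q) : ∃ s ∉ q, ∃ k : ℕ, s * y ^ k = 0 := by
  have : q.IsPrime := hq.1.1
  by_contra! h
  -- otherwise a prime avoiding `(R \ q) · y^ℕ` lies strictly below `q`
  have hdisj : Disjoint ((⊥ : Ideal R) : Set R)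
      (q.primeCompl ⊔ Submonoid.powers y : Submonoid R) := by
    rw [Set.disjoint_left]
    rintro a ha hS
    obtain ⟨s, hs, _, ⟨k, rfl⟩, hsk⟩ := Submonoid.mem_sup.1 hS
    exact h s hs k (hsk.trans ha)
  obtain ⟨p, hp, -, hps⟩ := Ideal.exists_le_prime_disjoint ⊥ _ hdisj
  have hpq : p ≤ q := fun a hap => by
    by_contra haq
    exact Set.disjoint_left.1 hps hap (Submonoid.mem_sup_left haq)
  have hqp : q ≤ p := hq.2 ⟨hp, bot_le⟩ hpq
  exact Set.disjoint_left.1 hps (hqp hy) (Submonoid.mem_sup_right (Submonoid.mem_powers y))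

theorem radical_span_eq_maximalIdeal_of_powerTorsion_le [IsLocalRing R] [Ring.KrullDimLE 1 R]
    {x y : R} (hx : (Ideal.span {x}).radical = maximalIdeal R) (hxy : x ∣ y)
    (hT : powerTorsion y ≤ powerTorsion x) : (Ideal.span {y}).radical = maximalIdeal R := by
  refine le_antisymm (hx ▸ Ideal.radical_mono (Ideal.span_singleton_le_span_singleton.2 hxy)) ?_
  rw [Ideal.radical_eq_sInf]
  refine le_sInf fun q ⟨hyq, hq⟩ => ?_
  by_contra hmq
  have hqm : q ≠ maximalIdeal R := fun h => hmq h.ge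
  have hxq : x ∉ q := fun hxq =>
    hqm (le_antisymm (le_maximalIdeal hq.ne_top)
      (hx ▸ hq.radical_le_iff.2 (Ideal.span_le.2 (by simpa))))
  have hqmin : q ∈ minimalPrimes R :=
    (Ring.krullDimLE_one_iff.1 ‹_› q hq).resolve_right fun hmax => hqm (eq_maximalIdeal hmax)
  obtain ⟨s, hsq, k, hs⟩ :=
    exists_mul_pow_eq_zero_of_mem_minimalPrimes hqmin (hyq (Ideal.mem_span_singleton_self y))
  obtain ⟨n, hn⟩ := mem_powerTorsion.1 (hT (mem_powerTorsion.2 ⟨k, by rw [mul_comm, hs]⟩))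
  rcases hq.mem_or_mem (hn ▸ q.zero_mem) with h | h
  exacts [hxq (hq.mem_of_pow_mem n h), hsq h]

end

/-- in a 1-dimensional Noetherian local ring with `x` a parameter
and `y = u x`, `y` is a parameter iff the multiplication-by-`u` map
`R/(x)^lim → R/(y)^lim` is injective, i.e. iff `(y)^lim : u = (x)^lim`. -/
theorem stmt9 {R : Type*} [CommRing R] [IsNoetherianRing R] [IsLocalRing R]
    (hdim : ringKrullDim R = 1)
    (x u y : R) (hy : y = u * x)
    (hx : (Ideal.span {x}).radical = IsLocalRing.maximalIdeal R) :
    (Ideal.span {y}).radical = IsLocalRing.maximalIdeal R ↔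
      (∀ r : R, u * r ∈ limClosure1 y → r ∈ limClosure1 x) := by
  subst hy
  have hxm : x ∈ maximalIdeal R := hx ▸ Ideal.le_radical (Ideal.mem_span_singleton_self x)
  have : Ring.KrullDimLE 1 R := Ring.krullDimLE_iff.2 hdim.le
  refine ⟨fun hy r => mem_limClosure1_of_mul_mem (hy ▸ hxm), fun H => ?_⟩
  exact radical_span_eq_maximalIdeal_of_powerTorsion_le hx (dvd_mul_left x u)
    (powerTorsion_mul_le_powerTorsion (maximalIdeal_le_jacobson _ hxm) H)
end

section
/- Let (R,m) be a 1-dimensional Noetherian local ring and x a parameter. Then for all sufficiently large n, the limit closure (x)^lim equals (x) + (0 : x^n). -/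
/-!
Writing `r x^n ∈ (x^(n+1))` as `r x^n = c x^(n+1)` shows `r - c x ∈ (0 : x^n)`, so
`(x^(n+1)) : x^n = (x) + (0 : x^n)` in every commutative ring, and `(x)^lim` is the union of
these ideals. The annihilators `(0 : x^n)` form an ascending chain, which stabilizes in a
Noetherian ring; from then on every member of the union equals `(x) + (0 : x^n)`.
-/

open Ideal

section CommRing

variable {R : Type*} [CommRing R]

theorem Ideal.span_pow_succ_colon_span_pow (x : R) (n : ℕ) :
    (span {x ^ (n + 1)}).colon (span {x ^ n}) = span {x} ⊔ (⊥ : Ideal R).colon (span {x ^ n}) := by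
  ext r
  simp only [mem_colon_span_singleton, mem_span_singleton', Submodule.mem_sup, Submodule.mem_bot]
  constructor
  · rintro ⟨c, hc⟩
    exact ⟨c * x, ⟨c, rfl⟩, r - c * x, by rw [sub_mul, ← hc]; ring, by ring⟩
  · rintro ⟨_, ⟨c, rfl⟩, z, hz, rfl⟩
    exact ⟨c, by linear_combination -hz⟩

theorem Ideal.monotone_bot_colon_span_pow (x : R) :
    Monotone fun n : ℕ ↦ (⊥ : Ideal R).colon (span {x ^ n}) := fun _ _ hmn ↦
  Submodule.colon_mono le_rfl (span_singleton_le_span_singleton.mpr (pow_dvd_pow x hmn))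

theorem mem_limClosure1_iff_s10 {x r : R} :
    r ∈ limClosure1 x ↔ ∃ n : ℕ, r ∈ (span {x ^ (n + 1)}).colon (span {x ^ n}) := by
  simp only [limClosure1, Set.mem_ofPred_eq, mem_colon_span_singleton, mul_comm r]
  constructor
  · rintro ⟨t, ht, hr⟩
    exact ⟨t - 1, by rwa [Nat.sub_add_cancel ht]⟩
  · rintro ⟨n, hr⟩
    exact ⟨n + 1, n.succ_pos, hr⟩

theorem limClosure1_eq_iUnion (x : R) :
    limClosure1 x = ⋃ n : ℕ, ↑(span {x} ⊔ (⊥ : Ideal R).colon (span {x ^ n})) := by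
  ext r
  simp only [mem_limClosure1_iff_s10, span_pow_succ_colon_span_pow, Set.mem_iUnion, SetLike.mem_coe]

end CommRing

theorem Ideal.exists_bot_colon_span_pow_le {R : Type*} [CommRing R] [IsNoetherianRing R] (x : R) :
    ∃ N : ℕ, ∀ n ≥ N, ∀ m : ℕ,
      (⊥ : Ideal R).colon (span {x ^ m}) ≤ (⊥ : Ideal R).colon (span {x ^ n}) := by
  obtain ⟨N, hN⟩ := monotone_stabilizes_iff_noetherian.mpr inferInstance
    ⟨_, monotone_bot_colon_span_pow x⟩
  refine ⟨N, fun n hn m ↦ ?_⟩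
  rcases le_total m n with hmn | hnm
  · exact monotone_bot_colon_span_pow x hmn
  · exact ((hN m (hn.trans hnm)).symm.trans (hN n hn)).le

theorem stmt10_general {R : Type*} [CommRing R] [IsNoetherianRing R]
    (x : R) :
    ∃ N : ℕ, ∀ n : ℕ, N ≤ n →
      limClosure1 x =
        ↑(Ideal.span {x} ⊔ Submodule.colon (⊥ : Ideal R) (Ideal.span {x ^ n})) := by
  obtain ⟨N, hN⟩ := exists_bot_colon_span_pow_le x
  refine ⟨N, fun n hn ↦ (limClosure1_eq_iUnion x).trans (subset_antisymm ?_ ?_)⟩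
  · exact Set.iUnion_subset fun m ↦ SetLike.coe_subset_coe.mpr (sup_le_sup_left (hN n hn m) _)
  · exact Set.subset_iUnion_of_subset n le_rfl

/-- in a 1-dimensional Noetherian local ring, for a parameter `x`
and all sufficiently large `n`, the limit closure `(x)^lim` equals
`(x) + (0 : x^n)`. -/
theorem stmt10 {R : Type*} [CommRing R] [IsNoetherianRing R] [IsLocalRing R]
    (hdim : ringKrullDim R = 1)
    (x : R) (hx : (Ideal.span {x}).radical = IsLocalRing.maximalIdeal R) :
    ∃ N : ℕ, ∀ n : ℕ, N ≤ n →
      limClosure1 x =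
        ↑(Ideal.span {x} ⊔ Submodule.colon (⊥ : Ideal R) (Ideal.span {x ^ n})) :=
  stmt10_general x
end

section
/- Let R be a 1-dimensional Noetherian local ring with primary decomposition 0 = q_1 ∩ ⋯ ∩ q_s ∩ J, where √q_i = p_i are the distinct minimal primes and √J = m. Let x be a parameter. Then for large n, (x) + (0 : x^n) = (x) + q_1 ∩ ⋯ ∩ q_s. -/
/-!
Since `x` lies in `√J = m` but in no minimal prime `pᵢ` (the maximal ideal is not minimal in
dimension one, and `√(x) = m`), for large `n` the power `xⁿ` lies in `J` and in no `pᵢ`.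
Colon by `xⁿ` then kills the component `J` and fixes each primary `qᵢ`, so already
`0 : xⁿ = q₁ ∩ ⋯ ∩ qₛ`.
-/

open IsLocalRing

namespace Ideal

variable {R : Type*} [CommSemiring R]

theorem IsPrimary.colon_span_singleton_of_notMem_radical {q : Ideal R} (hq : q.IsPrimary)
    {y : R} (hy : y ∉ q.radical) : q.colon (span {y}) = q :=
  le_antisymm
    (fun _ ha ↦ ((isPrimary_iff.mp hq).2 (mem_colon_span_singleton.mp ha)).resolve_right hy)
    le_colon

theorem colon_span_singleton_iInf_inf_eq {ι : Sort*} {q : ι → Ideal R} {J : Ideal R}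
    (hq : ∀ i, (q i).IsPrimary) {y : R} (hyJ : y ∈ J) (hyq : ∀ i, y ∉ (q i).radical) :
    ((⨅ i, q i) ⊓ J).colon (span {y}) = ⨅ i, q i := by
  have hJ : J.colon (span {y}) = ⊤ :=
    (Submodule.colon_eq_top_iff_subset _).mpr
      (SetLike.coe_subset_coe.mpr ((span_singleton_le_iff_mem J).mpr hyJ))
  rw [Submodule.inf_colon, Submodule.iInf_colon, hJ, inf_top_eq]
  exact iInf_congr fun i ↦ (hq i).colon_span_singleton_of_notMem_radical (hyq i)

end Ideal

namespace IsLocalRing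

variable {R : Type*} [CommRing R] [IsLocalRing R]

theorem maximalIdeal_notMem_minimalPrimes (h : ringKrullDim R ≠ 0) :
    maximalIdeal R ∉ minimalPrimes R := fun hm ↦
  h <| by rw [← maximalIdeal_height_eq_ringKrullDim, Ideal.height_eq_zero_iff.mpr hm]; rfl

theorem notMem_of_radical_span_singleton_eq_maximalIdeal {x : R}
    (hx : (Ideal.span {x}).radical = maximalIdeal R) {P : Ideal R} (hP : P.IsPrime)
    (hPm : P ≠ maximalIdeal R) : x ∉ P := fun hxP ↦
  hPm <| le_antisymm (le_maximalIdeal hP.ne_top)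
    (hx ▸ hP.radical_le_iff.mpr ((Ideal.span_singleton_le_iff_mem P).mpr hxP))

end IsLocalRing

theorem stmt12_general {R : Type*} [CommRing R] [IsLocalRing R]
    (hdim : ringKrullDim R = 1)
    {s : ℕ} (q : Fin s → Ideal R) (p : Fin s → Ideal R) (J : Ideal R)
    (hprimary : ∀ i, (q i).IsPrimary) (hrad : ∀ i, (q i).radical = p i)
    (hmin : ∀ i, p i ∈ minimalPrimes R)
    (hJ : J.radical = IsLocalRing.maximalIdeal R)
    (hdecomp : (⊥ : Ideal R) = (⨅ i, q i) ⊓ J)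
    (x : R) (hx : (Ideal.span {x}).radical = IsLocalRing.maximalIdeal R) :
    ∃ N : ℕ, ∀ n : ℕ, N ≤ n →
      Ideal.span {x} ⊔ Submodule.colon (⊥ : Ideal R) (Ideal.span {x ^ n}) =
        Ideal.span {x} ⊔ ⨅ i, q i := by
  have hxp (i : Fin s) : x ∉ p i :=
    notMem_of_radical_span_singleton_eq_maximalIdeal hx (hmin i).1.1 fun h ↦
      maximalIdeal_notMem_minimalPrimes (by simp [hdim]) (h ▸ hmin i)
  obtain ⟨k, hk⟩ : x ∈ J.radical :=
    hJ ▸ hx ▸ Ideal.le_radical (Ideal.mem_span_singleton_self x)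
  refine ⟨k, fun n hn ↦ ?_⟩
  rw [hdecomp, Ideal.colon_span_singleton_iInf_inf_eq hprimary (J.pow_mem_of_pow_mem hk hn)
    fun i hi ↦ hxp i (hrad i ▸ Ideal.mem_radical_of_pow_mem hi)]

/-- let `(R,m)` be a 1-dimensional Noetherian local ring with a
primary decomposition `0 = q_1 ∩ ⋯ ∩ q_s ∩ J`, where the `√q_i = p_i` are the
distinct minimal primes and `√J = m`.  If `x` is a parameter, then for all
large `n`, `(x) + (0 : x^n) = (x) + q_1 ∩ ⋯ ∩ q_s`. -/
theorem stmt12 {R : Type*} [CommRing R] [IsNoetherianRing R] [IsLocalRing R]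
    (hdim : ringKrullDim R = 1)
    {s : ℕ} (q : Fin s → Ideal R) (p : Fin s → Ideal R) (J : Ideal R)
    (hprimary : ∀ i, (q i).IsPrimary) (hrad : ∀ i, (q i).radical = p i)
    (hmin : ∀ i, p i ∈ minimalPrimes R)
    (hall : ∀ P ∈ minimalPrimes R, ∃ i, p i = P)
    (hdistinct : Function.Injective p)
    (hJ : J.radical = IsLocalRing.maximalIdeal R)
    (hdecomp : (⊥ : Ideal R) = (⨅ i, q i) ⊓ J)
    (x : R) (hx : (Ideal.span {x}).radical = IsLocalRing.maximalIdeal R) :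
    ∃ N : ℕ, ∀ n : ℕ, N ≤ n →
      Ideal.span {x} ⊔ Submodule.colon (⊥ : Ideal R) (Ideal.span {x ^ n}) =
        Ideal.span {x} ⊔ ⨅ i, q i :=
  stmt12_general hdim q p J hprimary hrad hmin hJ hdecomp x hx
end

section
/- In the ring R = k[a,b,c,d]/((a,b) ∩ (c,d)) localized at (a,b,c,d) (k a field), with x_1 = a+c, x_2 = b+d: the sequence x_1, x_2 is a system of parameters and its limit closure satisfies (x_1,x_2)^lim = m, the maximal ideal. -/
open MvPolynomial

/-- The defining ideal `(a,b) ∩ (c,d)` of `k[a,b,c,d]`. -/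
noncomputable def defIdeal (k : Type) [Field k] : Ideal (MvPolynomial (Fin 4) k) :=
  Ideal.span {X 0, X 1} ⊓ Ideal.span {X 2, X 3}

/-- The ring `k[a,b,c,d]/((a,b) ∩ (c,d))`. -/
abbrev QR (k : Type) [Field k] : Type :=
  MvPolynomial (Fin 4) k ⧸ defIdeal k

/-- The irrelevant maximal ideal `(a,b,c,d)` of `k[a,b,c,d]/((a,b) ∩ (c,d))`. -/
noncomputable def mQ (k : Type) [Field k] : Ideal (QR k) :=
  Ideal.span {Ideal.Quotient.mk (defIdeal k) (X 0), Ideal.Quotient.mk (defIdeal k) (X 1),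
    Ideal.Quotient.mk (defIdeal k) (X 2), Ideal.Quotient.mk (defIdeal k) (X 3)}

/-!
Write `a, b, c, d` for the images of the variables, so that `ac = ad = bc = bd = 0`. Then
`a² = a x₁`, `c² = c x₁`, `b² = b x₂`, `d² = d x₂`, so `(x₁, x₂)` has radical `m` and Krull's height
theorem gives `dim R_m ≤ 2`; the primes `(a, b) ⊂ (a, b, c) ⊂ m`, kernels of maps setting some
variables to zero, give `dim R_m ≥ 2`. Moreover `x₁x₂ a = b x₁²`, `x₁x₂ b = a x₂²`, `x₁x₂ c = d x₁²`
and `x₁x₂ d = c x₂²`, so `m ⊆ (x₁², x₂²) : x₁x₂`. Conversely `(x₁x₂)^(t-1) ∉ (x₁^t, x₂^t)`: setting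
`c = d = 0` maps `R_m` to `k[a, b, c, d]` localized at `(a, b, c, d)` with `x₁ ↦ a`, `x₂ ↦ b`, and
a polynomial with nonzero constant term times `(ab)^(t-1)` still contains the monomial `(ab)^(t-1)`,
whereas every monomial occurring in an element of `(a^t, b^t)` is divisible by `a^t` or `b^t`.
-/

section Relations

variable {A : Type*} [CommRing A] {a b c d : A}

theorem mem_radical_of_add_mem_of_mul_eq_zero {I : Ideal A} (h : a * c = 0) (hI : a + c ∈ I) :
    a ∈ I.radical ∧ c ∈ I.radical :=
  ⟨⟨2, by rw [show a ^ 2 = a * (a + c) by linear_combination -h]; exact I.mul_mem_left a hI⟩,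
    ⟨2, by rw [show c ^ 2 = c * (a + c) by linear_combination -h]; exact I.mul_mem_left c hI⟩⟩

theorem span_le_radical_span_add_add (hac : a * c = 0) (hbd : b * d = 0) :
    Ideal.span {a, b, c, d} ≤ (Ideal.span {a + c, b + d}).radical := by
  have hx₁ := mem_radical_of_add_mem_of_mul_eq_zero hac
    (Ideal.subset_span (s := {a + c, b + d}) (by simp))
  have hx₂ := mem_radical_of_add_mem_of_mul_eq_zero hbd
    (Ideal.subset_span (s := {a + c, b + d}) (by simp))
  simp only [Ideal.span_le, Set.insert_subset_iff, Set.singleton_subset_iff, SetLike.mem_coe]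
  exact ⟨hx₁.1, hx₂.1, hx₁.2, hx₂.2⟩

theorem mul_mem_span_sq_of_mem_span (hac : a * c = 0) (had : a * d = 0) (hbc : b * c = 0)
    {y : A} (hy : y ∈ Ideal.span {a, b, c, d}) :
    (a + c) * (b + d) * y ∈ Ideal.span {(a + c) ^ 2, (b + d) ^ 2} := by
  suffices Ideal.span {a, b, c, d} ≤
      (Ideal.span {(a + c) ^ 2, (b + d) ^ 2}).colon {(a + c) * (b + d)} by
    simpa [mul_comm] using this hy
  simp only [Ideal.span_le, Set.insert_subset_iff, Set.singleton_subset_iff, SetLike.mem_coe,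
    Submodule.mem_colon_singleton, smul_eq_mul, Ideal.mem_span_pair]
  exact ⟨⟨b, 0, by linear_combination a * hbc + c * hbc - a * had - d * hac⟩,
    ⟨0, a, by linear_combination b * had + d * had - b * hbc - d * hbc⟩,
    ⟨d, 0, by linear_combination a * had + d * hac - a * hbc - c * hbc⟩,
    ⟨0, c, by linear_combination b * hbc + d * hbc - b * had - d * had⟩⟩

end Relations

section Dimension

variable {R : Type*} [CommRing R]

theorem two_le_height_of_lt_of_lt {p₀ p₁ p₂ : Ideal R} [p₀.IsPrime] [p₁.IsPrime] [p₂.IsPrime]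
    (h₀₁ : p₀ < p₁) (h₁₂ : p₁ < p₂) : 2 ≤ p₂.height :=
  calc (2 : ℕ∞) ≤ p₀.height + 1 + 1 := by
        rw [add_assoc]; exact le_add_self
    _ ≤ p₁.height + 1 := by gcongr; exact Ideal.height_add_one_le_of_lt_of_isPrime h₀₁
    _ ≤ p₂.height := Ideal.height_add_one_le_of_lt_of_isPrime h₁₂

theorem ringKrullDim_le_card_of_radical_span_eq_maximalIdeal [IsNoetherianRing R]
    [IsLocalRing R] (s : Finset R)
    (hs : (Ideal.span (s : Set R)).radical = IsLocalRing.maximalIdeal R) :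
    ringKrullDim R ≤ s.card := by
  have hmin : IsLocalRing.maximalIdeal R ∈ (Ideal.span (s : Set R)).minimalPrimes := by
    rw [← Ideal.radical_minimalPrimes, hs, Ideal.minimalPrimes_eq_subsingleton_self]
    rfl
  rw [← IsLocalRing.maximalIdeal_height_eq_ringKrullDim]
  exact_mod_cast Ideal.height_le_card_of_mem_minimalPrimes_span_finset hmin

end Dimension

namespace MvPolynomial

variable {σ R : Type*} [CommRing R]

theorem mem_idealOfVars_iff {p : MvPolynomial σ R} :
    p ∈ idealOfVars σ R ↔ constantCoeff p = 0 := by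
  rw [← pow_one (idealOfVars σ R), mem_pow_idealOfVars_iff']
  simp [Finsupp.degree_eq_zero_iff, constantCoeff_eq]

theorem exists_le_of_mul_monomial_mem_span_monomial {p : MvPolynomial σ R}
    (hp : p ∉ idealOfVars σ R) {T : Set (σ →₀ ℕ)} {μ : σ →₀ ℕ}
    (h : p * monomial μ 1 ∈ Ideal.span ((monomial · (1 : R)) '' T)) : ∃ ν ∈ T, ν ≤ μ := by
  refine mem_ideal_span_monomial_image.mp h μ ?_
  simpa [coeff_mul_monomial', mem_idealOfVars_iff, constantCoeff_eq] using hp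

section Domain

variable [IsDomain R]

instance isPrime_idealOfVars : (idealOfVars σ R).IsPrime := by
  have : RingHom.ker (constantCoeff : MvPolynomial σ R →+* R) = idealOfVars σ R :=
    Ideal.ext fun _ => mem_idealOfVars_iff.symm
  exact this ▸ RingHom.ker_isPrime _

theorem exists_le_of_algebraMap_monomial_mem_map_span_monomial {T : Set (σ →₀ ℕ)} {μ : σ →₀ ℕ}
    (h : algebraMap _ (Localization.AtPrime (idealOfVars σ R)) (monomial μ (1 : R)) ∈
      (Ideal.span ((monomial · (1 : R)) '' T)).map (algebraMap _ _)) :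
    ∃ ν ∈ T, ν ≤ μ := by
  obtain ⟨⟨⟨q, hq⟩, ⟨p, hp⟩⟩, heq⟩ :=
    (IsLocalization.mem_map_algebraMap_iff (idealOfVars σ R).primeCompl _).mp h
  have hinj := IsLocalization.injective (Localization.AtPrime (idealOfVars σ R))
    (Ideal.primeCompl_le_nonZeroDivisors (idealOfVars σ R))
  rw [← map_mul, hinj.eq_iff, mul_comm] at heq
  exact exists_le_of_mul_monomial_mem_span_monomial hp (heq ▸ hq)

theorem algebraMap_X_mul_X_pow_notMem_span_pow {i j : σ} (hij : i ≠ j) {t : ℕ} (ht : 1 ≤ t) :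
    letI ι := algebraMap (MvPolynomial σ R) (Localization.AtPrime (idealOfVars σ R))
    ι (X i * X j) ^ (t - 1) ∉ Ideal.span {ι (X i) ^ t, ι (X j) ^ t} := by
  intro h
  rw [← map_pow, ← map_pow, ← map_pow, ← Set.image_pair, ← Ideal.map_span, X_pow_eq_monomial,
    X_pow_eq_monomial, ← Set.image_pair (monomial · (1 : R)), mul_pow, X_pow_eq_monomial,
    X_pow_eq_monomial, monomial_mul, one_mul] at h
  obtain ⟨ν, hν, hle⟩ := exists_le_of_algebraMap_monomial_mem_map_span_monomial h
  rcases hν with rfl | rfl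
  · have : t ≤ t - 1 := by simpa [hij] using hle i
    omega
  · have : t ≤ t - 1 := by simpa [hij.symm] using hle j
    omega

end Domain

section KillVars

variable [DecidableEq σ]

noncomputable def killVars (s : Finset σ) : MvPolynomial σ R →ₐ[R] MvPolynomial σ R :=
  aeval fun i => if i ∈ s then 0 else X i

theorem killVars_X (s : Finset σ) (i : σ) :
    killVars s (X i : MvPolynomial σ R) = if i ∈ s then 0 else X i :=
  aeval_X _ _

theorem killVars_comp_killVars {s t : Finset σ} (h : s ⊆ t) :
    (killVars t).comp (killVars s) = (killVars t : MvPolynomial σ R →ₐ[R] _) := by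
  refine algHom_ext fun i => ?_
  by_cases hs : i ∈ s
  · simp [killVars_X, hs, h hs]
  · simp [killVars_X, hs]

theorem constantCoeff_killVars (s : Finset σ) (p : MvPolynomial σ R) :
    constantCoeff (killVars s p) = constantCoeff p := by
  induction p using MvPolynomial.induction_on with
  | C r => simp
  | add p q hp hq => simp [hp, hq]
  | mul_X p i hp => by_cases hi : i ∈ s <;> simp [killVars_X, hi, hp]

theorem span_X_image_le_ker_killVars (s : Finset σ) :
    Ideal.span (X '' s) ≤ RingHom.ker (killVars s : MvPolynomial σ R →ₐ[R] _) := by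
  rw [Ideal.span_le]
  rintro _ ⟨i, hi, rfl⟩
  simp [killVars_X, Finset.mem_coe.mp hi]

end KillVars

end MvPolynomial

namespace QR

variable (k : Type) [Field k]

theorem mk_X_mul_mk_X_eq_zero (i j : Fin 4) (hi : i = 0 ∨ i = 1) (hj : j = 2 ∨ j = 3) :
    Ideal.Quotient.mk (defIdeal k) (X i) * Ideal.Quotient.mk (defIdeal k) (X j) = 0 := by
  rw [← map_mul, Ideal.Quotient.eq_zero_iff_mem]
  exact ⟨Ideal.mul_mem_right _ _ (Ideal.subset_span (by simpa)),
    Ideal.mul_mem_left _ _ (Ideal.subset_span (by simpa))⟩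

theorem mQ_eq_map_idealOfVars :
    mQ k = (idealOfVars (Fin 4) k).map (Ideal.Quotient.mk (defIdeal k)) := by
  rw [Ideal.map_span, ← Set.range_comp, mQ]
  congr 1
  ext
  simp [Fin.exists_fin_succ, eq_comm]

theorem defIdeal_le_ker_killVars {s : Finset (Fin 4)} (hs : {0, 1} ⊆ s ∨ {2, 3} ⊆ s) :
    defIdeal k ≤ RingHom.ker (killVars s : MvPolynomial (Fin 4) k →ₐ[k] _) := by
  refine le_trans ?_ (span_X_image_le_ker_killVars s)
  rcases hs with hs | hs
  · refine inf_le_left.trans (Ideal.span_mono ?_)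
    simpa [Set.insert_subset_iff, Finset.insert_subset_iff] using hs
  · refine inf_le_right.trans (Ideal.span_mono ?_)
    simpa [Set.insert_subset_iff, Finset.insert_subset_iff] using hs

section LiftKillVars

variable {s t : Finset (Fin 4)} (hs : {0, 1} ⊆ s ∨ {2, 3} ⊆ s) (ht : {0, 1} ⊆ t ∨ {2, 3} ⊆ t)

noncomputable def liftKillVars : QR k →+* MvPolynomial (Fin 4) k :=
  Ideal.Quotient.lift _ (killVars s).toRingHom fun _ hp => defIdeal_le_ker_killVars k hs hp

@[simp]
theorem liftKillVars_mk (p : MvPolynomial (Fin 4) k) :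
    liftKillVars k hs (Ideal.Quotient.mk _ p) = killVars s p :=
  rfl

instance isPrime_ker_liftKillVars : (RingHom.ker (liftKillVars k hs)).IsPrime :=
  RingHom.ker_isPrime _

theorem comap_liftKillVars_idealOfVars :
    (idealOfVars (Fin 4) k).comap (liftKillVars k hs) = mQ k := by
  have hle : defIdeal k ≤ idealOfVars (Fin 4) k :=
    inf_le_left.trans (Ideal.span_mono (by simp [Set.insert_subset_iff]))
  ext q
  obtain ⟨p, rfl⟩ := Ideal.Quotient.mk_surjective q
  rw [mQ_eq_map_idealOfVars, Ideal.mem_quotient_iff_mem hle, Ideal.mem_comap, liftKillVars_mk,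
    mem_idealOfVars_iff, mem_idealOfVars_iff, constantCoeff_killVars]

theorem mk_X_mem_ker_liftKillVars_iff (i : Fin 4) :
    Ideal.Quotient.mk (defIdeal k) (X i) ∈ RingHom.ker (liftKillVars k hs) ↔ i ∈ s := by
  by_cases hi : i ∈ s <;> simp [killVars_X, hi, X_ne_zero]

theorem ker_liftKillVars_mono (hst : s ⊆ t) :
    RingHom.ker (liftKillVars k hs) ≤ RingHom.ker (liftKillVars k ht) := by
  intro q hq
  obtain ⟨p, rfl⟩ := Ideal.Quotient.mk_surjective q
  rw [RingHom.mem_ker, liftKillVars_mk] at hq ⊢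
  rw [← killVars_comp_killVars hst, AlgHom.comp_apply, hq, map_zero]

end LiftKillVars

theorem isPrime_mQ : (mQ k).IsPrime :=
  comap_liftKillVars_idealOfVars k (s := {0, 1}) (.inl subset_rfl) ▸ Ideal.comap_isPrime _ _

theorem two_le_height_mQ : 2 ≤ (mQ k).height := by
  have := isPrime_mQ k
  have hs₁ : ({0, 1} : Finset (Fin 4)) ⊆ {0, 1, 2} := by decide
  have h₀₁ : RingHom.ker (liftKillVars k (s := {0, 1}) (.inl subset_rfl)) <
      RingHom.ker (liftKillVars k (.inl hs₁)) :=
    SetLike.lt_iff_le_and_exists.mpr ⟨ker_liftKillVars_mono k _ _ hs₁, _,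
      (mk_X_mem_ker_liftKillVars_iff k _ 2).mpr (by decide),
      fun h => absurd ((mk_X_mem_ker_liftKillVars_iff k _ 2).mp h) (by decide)⟩
  have h₁₂ : RingHom.ker (liftKillVars k (.inl hs₁)) < mQ k := by
    refine SetLike.lt_iff_le_and_exists.mpr ⟨?_, _, Ideal.subset_span (by simp),
      fun h => absurd ((mk_X_mem_ker_liftKillVars_iff k _ 3).mp h) (by decide)⟩
    rw [← comap_liftKillVars_idealOfVars k (.inl hs₁), RingHom.ker_eq_comap_bot]
    exact Ideal.comap_mono bot_le
  exact two_le_height_of_lt_of_lt h₀₁ h₁₂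

variable [(mQ k).IsPrime]

noncomputable abbrev locX (i : Fin 4) : Localization.AtPrime (mQ k) :=
  algebraMap (QR k) _ (Ideal.Quotient.mk (defIdeal k) (X i))

theorem locX_mul_locX_eq_zero (i j : Fin 4) (hi : i = 0 ∨ i = 1) (hj : j = 2 ∨ j = 3) :
    locX k i * locX k j = 0 := by
  rw [← map_mul, mk_X_mul_mk_X_eq_zero k i j hi hj, map_zero]

theorem maximalIdeal_eq_span_locX : IsLocalRing.maximalIdeal (Localization.AtPrime (mQ k)) =
    Ideal.span {locX k 0, locX k 1, locX k 2, locX k 3} := by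
  rw [← Localization.AtPrime.map_eq_maximalIdeal]
  change Ideal.map _ (Ideal.span _) = _
  rw [Ideal.map_span]
  simp only [Set.image_insert_eq, Set.image_singleton]

theorem radical_span_eq_maximalIdeal :
    (Ideal.span {locX k 0 + locX k 2, locX k 1 + locX k 3}).radical =
      IsLocalRing.maximalIdeal (Localization.AtPrime (mQ k)) := by
  refine le_antisymm ((Ideal.IsPrime.radical_le_iff inferInstance).mpr ?_) ?_
  · simp only [maximalIdeal_eq_span_locX, Ideal.span_le, Set.insert_subset_iff,
      Set.singleton_subset_iff, SetLike.mem_coe]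
    exact ⟨add_mem (Ideal.subset_span (by simp)) (Ideal.subset_span (by simp)),
      add_mem (Ideal.subset_span (by simp)) (Ideal.subset_span (by simp))⟩
  · rw [maximalIdeal_eq_span_locX]
    exact span_le_radical_span_add_add (A := Localization.AtPrime (mQ k))
      (locX_mul_locX_eq_zero k 0 2 (.inl rfl) (.inl rfl))
      (locX_mul_locX_eq_zero k 1 3 (.inr rfl) (.inr rfl))

theorem ringKrullDim_eq_two : ringKrullDim (Localization.AtPrime (mQ k)) = 2 := by
  classical
  refine le_antisymm ?_ ?_
  · have := ringKrullDim_le_card_of_radical_span_eq_maximalIdeal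
      {locX k 0 + locX k 2, locX k 1 + locX k 3}
      (by rw [Finset.coe_pair]; exact radical_span_eq_maximalIdeal k)
    exact this.trans (by exact_mod_cast Finset.card_le_two)
  · rw [IsLocalization.AtPrime.ringKrullDim_eq_height (mQ k) (Localization.AtPrime (mQ k))]
    exact WithBot.coe_le_coe.mpr (two_le_height_mQ k)

theorem mul_mem_span_sq {r : Localization.AtPrime (mQ k)}
    (hr : r ∈ IsLocalRing.maximalIdeal (Localization.AtPrime (mQ k))) :
    (locX k 0 + locX k 2) * (locX k 1 + locX k 3) * r ∈
      Ideal.span {(locX k 0 + locX k 2) ^ 2, (locX k 1 + locX k 3) ^ 2} := by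
  rw [maximalIdeal_eq_span_locX] at hr
  exact mul_mem_span_sq_of_mem_span (A := Localization.AtPrime (mQ k))
    (locX_mul_locX_eq_zero k 0 2 (.inl rfl) (.inl rfl))
    (locX_mul_locX_eq_zero k 0 3 (.inl rfl) (.inr rfl))
    (locX_mul_locX_eq_zero k 1 2 (.inr rfl) (.inl rfl)) hr

theorem pow_notMem_span_pow {t : ℕ} (ht : 1 ≤ t) :
    ((locX k 0 + locX k 2) * (locX k 1 + locX k 3)) ^ (t - 1) ∉
      Ideal.span {(locX k 0 + locX k 2) ^ t, (locX k 1 + locX k 3) ^ t} := by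
  let Φ := Localization.localRingHom (mQ k) (idealOfVars (Fin 4) k)
    (liftKillVars k (s := {2, 3}) (.inr subset_rfl)) (comap_liftKillVars_idealOfVars k _).symm
  let ι := algebraMap (MvPolynomial (Fin 4) k) (Localization.AtPrime (idealOfVars (Fin 4) k))
  have hx₁ : Φ (locX k 0 + locX k 2) = ι (X 0) := by simp [Φ, ι, killVars_X]
  have hx₂ : Φ (locX k 1 + locX k 3) = ι (X 1) := by simp [Φ, ι, killVars_X]
  intro h
  have := Ideal.mem_map_of_mem Φ h
  rw [Ideal.map_span, Set.image_pair, map_pow, map_pow, map_pow, map_mul, hx₁, hx₂,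
    ← map_mul] at this
  exact algebraMap_X_mul_X_pow_notMem_span_pow (by decide) ht this

end QR

/-- in `R = (k[a,b,c,d]/((a,b) ∩ (c,d)))` localized at
`m = (a,b,c,d)`, the elements `x₁ = a + c`, `x₂ = b + d` form a system of
parameters (the ring has dimension 2 and `(x₁,x₂)` is `m`-primary), and the
limit closure satisfies `(x₁,x₂)^lim = m`. -/
theorem stmt16 (k : Type) [Field k] [hp : (mQ k).IsPrime] :
    ∀ x₁ x₂ : Localization.AtPrime (mQ k),
      x₁ = algebraMap (QR k) (Localization.AtPrime (mQ k))
        (Ideal.Quotient.mk (defIdeal k) (X 0 + X 2)) →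
      x₂ = algebraMap (QR k) (Localization.AtPrime (mQ k))
        (Ideal.Quotient.mk (defIdeal k) (X 1 + X 3)) →
      ringKrullDim (Localization.AtPrime (mQ k)) = 2 ∧
      (Ideal.span {x₁, x₂}).radical =
        IsLocalRing.maximalIdeal (Localization.AtPrime (mQ k)) ∧
      (∀ r : Localization.AtPrime (mQ k),
        r ∈ IsLocalRing.maximalIdeal (Localization.AtPrime (mQ k)) ↔
          ∃ t : ℕ, 1 ≤ t ∧ (x₁ * x₂) ^ (t - 1) * r ∈ Ideal.span {x₁ ^ t, x₂ ^ t}) := by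
  rintro x₁ x₂ rfl rfl
  simp only [map_add]
  refine ⟨QR.ringKrullDim_eq_two k, QR.radical_span_eq_maximalIdeal k, fun r => ⟨fun hr =>
    ⟨2, one_le_two, by rw [Nat.succ_sub_one, pow_one]; exact QR.mul_mem_span_sq k hr⟩, ?_⟩⟩
  rintro ⟨t, ht, hmem⟩
  by_contra hr
  rw [Ideal.mul_unit_mem_iff_mem _ (IsLocalRing.notMem_maximalIdeal.mp hr)] at hmem
  exact QR.pow_notMem_span_pow k ht hmem
end

section
/- In the one-dimensional local ring R = k[x,z]/(x^2 z, z^2) localized at (x,z), the element x is a parameter, y = x^2 is a parameter, and (x^2) : x = (x); hence the multiplication-by-x map R/(x) → R/(x^2) is injective even though R is not Cohen–Macaulay. -/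
set_option synthInstance.maxHeartbeats 1000000

open MvPolynomial

/-- The defining ideal `(x²z, z²)` of `k[x,z]`. -/
noncomputable def defIdeal18 (k : Type) [Field k] : Ideal (MvPolynomial (Fin 2) k) :=
  Ideal.span {X 0 ^ 2 * X 1, X 1 ^ 2}

/-- The ring `k[x,z]/(x²z, z²)`. -/
abbrev QR18 (k : Type) [Field k] : Type :=
  MvPolynomial (Fin 2) k ⧸ defIdeal18 k

/-- The maximal ideal `(x,z)` of `k[x,z]/(x²z, z²)`. -/
noncomputable def mQ18 (k : Type) [Field k] : Ideal (QR18 k) :=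
  Ideal.span {Ideal.Quotient.mk (defIdeal18 k) (X 0),
    Ideal.Quotient.mk (defIdeal18 k) (X 1)}

/-- The image of a polynomial in the localization of `QR18 k` at `mQ18 k`. -/
noncomputable def toLoc18 (k : Type) [Field k] [hp : (mQ18 k).IsPrime]
    (f : MvPolynomial (Fin 2) k) : Localization.AtPrime (mQ18 k) :=
  algebraMap (QR18 k) (Localization.AtPrime (mQ18 k)) (Ideal.Quotient.mk (defIdeal18 k) f)

/-!
The ideal `I = (x²z, z²)` is a monomial ideal, so membership in `I`, and in a colon `I : m` by a
monomial `m`, is read off exponent vectors. This gives `I : x = (xz, z²)`, whence the annihilator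
of `x` in `R` lies in `(x)`; localizing, `r x ∈ (x²)` forces `r ∈ (x) + ann x = (x)`. It also
shows that `I : m ⊆ (x, z)` whenever `m ∉ I`, so the monomials `xʲ` and `xz` survive in the
localization. As `z² = 0`, the maximal ideal `(x, z)` is the radical of `(x)`, hence of `(x²)`:
Krull's principal ideal theorem bounds the dimension by `1`, and since `x` is not nilpotent the
dimension is not `0`. Finally `xz ≠ 0` is killed by both `x` and `z`, so the depth is `0`.
-/

namespace MvPolynomial

variable {σ R : Type*} [CommSemiring R]

theorem mem_span_monomial_tsub_of_mul_monomial_mem {s : Set (σ →₀ ℕ)} {p : MvPolynomial σ R}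
    {n : σ →₀ ℕ} (h : p * monomial n 1 ∈ Ideal.span ((monomial · (1 : R)) '' s)) :
    p ∈ Ideal.span ((monomial · (1 : R)) '' ((· - n) '' s)) := by
  rw [mem_ideal_span_monomial_image] at h ⊢
  intro m hm
  obtain ⟨si, hsi, hle⟩ := h (m + n) <| mem_support_iff.mpr <| by
    rw [coeff_mul_monomial, mul_one]; exact mem_support_iff.mp hm
  exact ⟨si - n, ⟨si, hsi, rfl⟩, tsub_le_iff_right.mpr hle⟩

theorem mem_idealOfVars_of_mul_monomial_mem {s : Set (σ →₀ ℕ)} {p : MvPolynomial σ R}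
    {n : σ →₀ ℕ} (h : p * monomial n 1 ∈ Ideal.span ((monomial · (1 : R)) '' s))
    (hn : monomial n 1 ∉ Ideal.span ((monomial · (1 : R)) '' s)) :
    p ∈ idealOfVars σ R := by
  rw [idealOfVars, ← Set.image_univ, mem_ideal_span_X_image]
  intro m hm
  by_contra! hm0
  obtain rfl : m = 0 := Finsupp.ext fun i ↦ hm0 i (Set.mem_univ i)
  -- the constant term of `p` reappears as the coefficient of `n` in `p * monomial n 1`
  have hn_mem : 0 + n ∈ (p * monomial n 1).support := by
    rw [mem_support_iff, coeff_mul_monomial, mul_one]; exact mem_support_iff.mp hm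
  obtain ⟨si, hsi, hle⟩ := mem_ideal_span_monomial_image.mp h _ hn_mem
  rw [zero_add] at hle
  refine hn (mem_ideal_span_monomial_image.mpr fun xi hxi ↦ ⟨si, hsi, ?_⟩)
  rwa [Finset.mem_singleton.mp (support_monomial_subset hxi)]

end MvPolynomial

section IsLocalization

variable {R S : Type*} [CommRing R] [CommRing S] [Algebra R S]

theorem IsLocalization.mem_map_of_forall_mul_eq_zero_mem (M : Submonoid R) [IsLocalization M S]
    {a : R} {J : Ideal R} (hJ : ∀ b, b * a = 0 → b ∈ J) {y : S}
    (hy : y * algebraMap R S a = 0) :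
    y ∈ J.map (algebraMap R S) := by
  obtain ⟨⟨b, u⟩, hb⟩ := IsLocalization.surj M y
  obtain ⟨c, hc⟩ := (IsLocalization.map_eq_zero_iff M S (b * a)).mp <| by
    rw [map_mul, ← hb, mul_right_comm, hy, zero_mul]
  refine (IsLocalization.mem_map_algebraMap_iff M S).mpr
    ⟨⟨⟨c * b, hJ _ (by rw [mul_assoc, hc])⟩, c * u⟩, ?_⟩
  simp only [Submonoid.coe_mul, map_mul, ← hb]
  ring

theorem IsLocalization.AtPrime.algebraMap_ne_zero (p : Ideal R) [p.IsPrime]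
    [IsLocalization.AtPrime S p] {a : R} (ha : ∀ c, c * a = 0 → c ∈ p) :
    algebraMap R S a ≠ 0 := by
  rw [Ne, IsLocalization.map_eq_zero_iff p.primeCompl]
  rintro ⟨⟨c, hc⟩, hca⟩
  exact hc (ha c hca)

end IsLocalization

theorem Ideal.colon_span_sq_eq_span {R : Type*} [CommRing R] {a : R}
    (ha : ∀ b, b * a = 0 → b ∈ Ideal.span {a}) :
    Submodule.colon (Ideal.span {a ^ 2}) (Ideal.span {a}) = Ideal.span {a} := by
  refine le_antisymm (fun r hr ↦ ?_) (fun r hr ↦ ?_)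
  · obtain ⟨t, ht⟩ := Ideal.mem_span_singleton'.mp
      (Submodule.mem_colon.mp hr a (Ideal.mem_span_singleton_self a))
    have hsub : (r - t * a) * a = 0 := by rw [smul_eq_mul] at ht; linear_combination -ht
    simpa using
      Ideal.add_mem _ (ha _ hsub) (Ideal.mul_mem_left _ t (Ideal.mem_span_singleton_self a))
  · refine Submodule.mem_colon.mpr fun q hq ↦ ?_
    obtain ⟨t, rfl⟩ := Ideal.mem_span_singleton'.mp hr
    obtain ⟨u, rfl⟩ := Ideal.mem_span_singleton'.mp hq
    exact Ideal.mem_span_singleton'.mpr ⟨t * u, by rw [smul_eq_mul]; ring⟩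

theorem ringKrullDim_eq_one_of_radical_span_singleton {R : Type*} [CommRing R]
    [IsNoetherianRing R] [IsLocalRing R] {x : R}
    (hx : (Ideal.span {x}).radical = IsLocalRing.maximalIdeal R)
    (hnil : ¬ IsNilpotent x) : ringKrullDim R = 1 := by
  rw [← IsLocalRing.maximalIdeal_height_eq_ringKrullDim]
  have hmin : IsLocalRing.maximalIdeal R ∈ (Ideal.span {x}).minimalPrimes := by
    rw [← Ideal.radical_minimalPrimes, hx, Ideal.minimalPrimes_eq_subsingleton_self]; rfl
  have hle := Ideal.height_le_one_of_isPrincipal_of_mem_minimalPrimes_of_isLocalRing _ hmin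
  have hne : (IsLocalRing.maximalIdeal R).height ≠ 0 := by
    intro h0
    have : Ring.KrullDimLE 0 R := by
      rw [ringKrullDimZero_iff_ringKrullDim_eq_zero,
        ← IsLocalRing.maximalIdeal_height_eq_ringKrullDim, h0]
      rfl
    exact hnil (Ring.KrullDimLE.isNilpotent_iff_mem_maximalIdeal.mpr
      (hx ▸ Ideal.le_radical (Ideal.mem_span_singleton_self x)))
  exact_mod_cast le_antisymm hle (Order.one_le_iff_ne_zero.mpr hne)

section QR18

variable (k : Type) [Field k]

theorem defIdeal18_eq_span_monomial : defIdeal18 k =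
    Ideal.span ((monomial · (1 : k)) ''
      {Finsupp.single 0 2 + Finsupp.single 1 1, Finsupp.single 1 2}) := by
  rw [defIdeal18, Set.image_pair, X_pow_eq_monomial, X_pow_eq_monomial, X, monomial_mul, one_mul]

theorem X0_sq_mul_X1_mem_defIdeal18 : X 0 ^ 2 * X 1 ∈ defIdeal18 k :=
  Ideal.subset_span (Set.mem_insert _ _)

theorem X1_sq_mem_defIdeal18 : X 1 ^ 2 ∈ defIdeal18 k :=
  Ideal.subset_span (Set.mem_insert_of_mem _ rfl)

theorem monomial_mem_defIdeal18_iff (n : Fin 2 →₀ ℕ) :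
    monomial n (1 : k) ∈ defIdeal18 k ↔ 2 ≤ n 0 ∧ 1 ≤ n 1 ∨ 2 ≤ n 1 := by
  classical
  rw [defIdeal18_eq_span_monomial, mem_ideal_span_monomial_image, support_monomial,
    if_neg one_ne_zero]
  simp [Finsupp.le_def, Fin.forall_fin_two]

theorem mem_span_of_mul_X0_mem_defIdeal18 {p : MvPolynomial (Fin 2) k}
    (h : p * X 0 ∈ defIdeal18 k) :
    p ∈ Ideal.span {X 0 * X 1, X 1 ^ 2} := by
  rw [X, defIdeal18_eq_span_monomial] at h
  have hxz : Finsupp.single (0 : Fin 2) 2 + Finsupp.single 1 1 - Finsupp.single 0 1 =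
      Finsupp.single 0 1 + Finsupp.single 1 1 := by
    ext i; fin_cases i <;> simp
  have hz : Finsupp.single (1 : Fin 2) 2 - Finsupp.single 0 1 = Finsupp.single 1 2 := by
    ext i; fin_cases i <;> simp
  convert mem_span_monomial_tsub_of_mul_monomial_mem h using 2
  rw [Set.image_pair, Set.image_pair, hxz, hz, X_pow_eq_monomial, X, X, monomial_mul, one_mul]

theorem mQ18_eq_map_idealOfVars :
    mQ18 k = (idealOfVars (Fin 2) k).map (Ideal.Quotient.mk (defIdeal18 k)) := by
  rw [mQ18, Ideal.map_span, ← Set.range_comp]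
  congr 1
  ext
  simp [Fin.exists_fin_two, eq_comm]

theorem mem_span_mk_X0_of_mul_eq_zero {a : QR18 k}
    (h : a * Ideal.Quotient.mk (defIdeal18 k) (X 0) = 0) :
    a ∈ Ideal.span {Ideal.Quotient.mk (defIdeal18 k) (X 0)} := by
  obtain ⟨p, rfl⟩ := Ideal.Quotient.mk_surjective a
  rw [← map_mul, Ideal.Quotient.eq_zero_iff_mem] at h
  have hp := Ideal.mem_map_of_mem (Ideal.Quotient.mk (defIdeal18 k))
    (mem_span_of_mul_X0_mem_defIdeal18 k h)
  rw [Ideal.map_span, Set.image_pair] at hp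
  refine Ideal.span_le.mpr ?_ hp
  rintro _ (rfl | rfl)
  · exact Ideal.mem_span_singleton.mpr ⟨_, by rw [map_mul]⟩
  · rw [SetLike.mem_coe, Ideal.Quotient.eq_zero_iff_mem.mpr (X1_sq_mem_defIdeal18 k)]
    exact zero_mem _

theorem mem_mQ18_of_mul_mk_monomial_eq_zero {n : Fin 2 →₀ ℕ}
    (hn : monomial n (1 : k) ∉ defIdeal18 k) {c : QR18 k}
    (h : c * Ideal.Quotient.mk (defIdeal18 k) (monomial n 1) = 0) :
    c ∈ mQ18 k := by
  obtain ⟨p, rfl⟩ := Ideal.Quotient.mk_surjective c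
  rw [← map_mul, Ideal.Quotient.eq_zero_iff_mem, defIdeal18_eq_span_monomial] at h
  rw [defIdeal18_eq_span_monomial] at hn
  rw [mQ18_eq_map_idealOfVars]
  exact Ideal.mem_map_of_mem _ (mem_idealOfVars_of_mul_monomial_mem h hn)

end QR18

section Localization18

variable (k : Type) [Field k] [(mQ18 k).IsPrime]

theorem toLoc18_mul (f g : MvPolynomial (Fin 2) k) :
    toLoc18 k (f * g) = toLoc18 k f * toLoc18 k g := by
  simp only [toLoc18, map_mul]

theorem toLoc18_pow (f : MvPolynomial (Fin 2) k) (j : ℕ) :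
    toLoc18 k (f ^ j) = toLoc18 k f ^ j := by
  simp only [toLoc18, map_pow]

theorem toLoc18_eq_zero_of_mem {f : MvPolynomial (Fin 2) k} (hf : f ∈ defIdeal18 k) :
    toLoc18 k f = 0 := by
  rw [toLoc18, Ideal.Quotient.eq_zero_iff_mem.mpr hf, map_zero]

theorem toLoc18_monomial_ne_zero {n : Fin 2 →₀ ℕ} (hn : monomial n (1 : k) ∉ defIdeal18 k) :
    toLoc18 k (monomial n 1) ≠ 0 :=
  IsLocalization.AtPrime.algebraMap_ne_zero (S := Localization.AtPrime (mQ18 k)) (mQ18 k)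
    fun _ hc ↦ mem_mQ18_of_mul_mk_monomial_eq_zero k hn hc

theorem maximalIdeal_eq_span_toLoc18 :
    IsLocalRing.maximalIdeal (Localization.AtPrime (mQ18 k)) =
      Ideal.span {toLoc18 k (X 0), toLoc18 k (X 1)} := by
  rw [← Localization.AtPrime.map_eq_maximalIdeal]
  exact (Ideal.map_span _ _).trans (congrArg Ideal.span (Set.image_pair _ _ _))

theorem radical_span_toLoc18_X0 :
    (Ideal.span {toLoc18 k (X 0)}).radical =
      IsLocalRing.maximalIdeal (Localization.AtPrime (mQ18 k)) := by
  refine le_antisymm ((IsLocalRing.maximalIdeal.isMaximal _).isPrime.radical_le_iff.mpr ?_) ?_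
  · rw [Ideal.span_singleton_le_iff_mem, maximalIdeal_eq_span_toLoc18]
    exact Ideal.subset_span (Set.mem_insert _ _)
  · rw [maximalIdeal_eq_span_toLoc18, Ideal.span_le]
    rintro _ (rfl | rfl)
    · exact Ideal.le_radical (Ideal.mem_span_singleton_self _)
    · refine ⟨2, ?_⟩
      rw [← toLoc18_pow, toLoc18_eq_zero_of_mem k (X1_sq_mem_defIdeal18 k)]
      exact zero_mem _

theorem mul_toLoc18_X0_mul_X1_eq_zero :
    ∀ s ∈ IsLocalRing.maximalIdeal (Localization.AtPrime (mQ18 k)),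
      s * toLoc18 k (X 0 * X 1) = 0 := by
  intro s hs
  rw [maximalIdeal_eq_span_toLoc18, Ideal.mem_span_pair] at hs
  obtain ⟨a, b, rfl⟩ := hs
  have hx : toLoc18 k (X 0) * toLoc18 k (X 0 * X 1) = 0 := by
    rw [← toLoc18_mul, show (X 0 * (X 0 * X 1) : MvPolynomial (Fin 2) k) = X 0 ^ 2 * X 1 by ring]
    exact toLoc18_eq_zero_of_mem k (X0_sq_mul_X1_mem_defIdeal18 k)
  have hz : toLoc18 k (X 1) * toLoc18 k (X 0 * X 1) = 0 := by
    rw [← toLoc18_mul, show (X 1 * (X 0 * X 1) : MvPolynomial (Fin 2) k) = X 0 * X 1 ^ 2 by ring]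
    exact toLoc18_eq_zero_of_mem k (Ideal.mul_mem_left _ _ (X1_sq_mem_defIdeal18 k))
  rw [add_mul, mul_assoc, mul_assoc, hx, hz, mul_zero, mul_zero, add_zero]

theorem mem_span_toLoc18_X0_of_mul_eq_zero {y : Localization.AtPrime (mQ18 k)}
    (hy : y * toLoc18 k (X 0) = 0) : y ∈ Ideal.span {toLoc18 k (X 0)} := by
  have := IsLocalization.mem_map_of_forall_mul_eq_zero_mem (S := Localization.AtPrime (mQ18 k))
    (mQ18 k).primeCompl (fun _ ↦ mem_span_mk_X0_of_mul_eq_zero k) hy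
  rwa [Ideal.map_span, Set.image_singleton] at this

theorem not_isNilpotent_toLoc18_X0 : ¬ IsNilpotent (toLoc18 k (X 0)) := by
  rintro ⟨j, hj⟩
  rw [← toLoc18_pow, X_pow_eq_monomial] at hj
  exact toLoc18_monomial_ne_zero k (by simp [monomial_mem_defIdeal18_iff]) hj

theorem toLoc18_X0_mul_X1_ne_zero : toLoc18 k (X 0 * X 1) ≠ 0 := by
  rw [X, X, monomial_mul, one_mul]
  exact toLoc18_monomial_ne_zero k (by simp [monomial_mem_defIdeal18_iff])

end Localization18

/-- in the one-dimensional local ring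
`R = (k[x,z]/(x²z, z²))_{(x,z)}`, the element `x` is a parameter, `y = x²` is a
parameter, and `(x²) : x = (x)`, so the multiplication-by-`x` map
`R/(x) → R/(x²)` is injective; nevertheless `R` is not Cohen–Macaulay (it has
dimension 1 but depth 0). -/
theorem stmt18 (k : Type) [Field k] [hp : (mQ18 k).IsPrime] :
    ringKrullDim (Localization.AtPrime (mQ18 k)) = 1 ∧
    (Ideal.span {toLoc18 k (X 0)}).radical =
      IsLocalRing.maximalIdeal (Localization.AtPrime (mQ18 k)) ∧
    (Ideal.span {toLoc18 k (X 0 ^ 2)}).radical =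
      IsLocalRing.maximalIdeal (Localization.AtPrime (mQ18 k)) ∧
    Submodule.colon (Ideal.span {toLoc18 k (X 0 ^ 2)}) (Ideal.span {toLoc18 k (X 0)}) =
      Ideal.span {toLoc18 k (X 0)} ∧
    -- depth 0: a nonzero element killed by the maximal ideal, so `R` is not CM
    (∃ w : Localization.AtPrime (mQ18 k), w ≠ 0 ∧
      ∀ s ∈ IsLocalRing.maximalIdeal (Localization.AtPrime (mQ18 k)), s * w = 0) := by
  refine ⟨ringKrullDim_eq_one_of_radical_span_singleton (R := Localization.AtPrime (mQ18 k))
    (radical_span_toLoc18_X0 k) (not_isNilpotent_toLoc18_X0 k), radical_span_toLoc18_X0 k, ?_, ?_,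
    ⟨_, toLoc18_X0_mul_X1_ne_zero k, mul_toLoc18_X0_mul_X1_eq_zero k⟩⟩
  · rw [toLoc18_pow, ← Ideal.span_singleton_pow, Ideal.radical_pow _ two_ne_zero,
      radical_span_toLoc18_X0]
  · rw [toLoc18_pow]
    exact Ideal.colon_span_sq_eq_span (R := Localization.AtPrime (mQ18 k))
      fun _ ↦ mem_span_toLoc18_X0_of_mul_eq_zero k
end
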